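/- arXiv:1902.06307 — 6 statements merged into one kernel-verified Lean document; each statement's English description precedes it below -/
import Mathlib

section
/- Let G be a matching covered graph. Then the perfect matching width of G is at most the maximum of the perfect matching widths of the bricks and braces of G. -/
/-!
Induction on the number of vertices. If `G` has a non-trivial tight cut `∂(Z)`, both
contractions `G/Z` and `G/Zᶜ` are smaller, and their bricks and braces are bricks and braces
of `G`. Take optimal decompositions of the two contractions, delete the two leaves carrying the
contraction vertices and join their neighbours by an edge. Every edge of the glued tree induces
in `G` the preimage of a cut induced in one of the contractions, say `G/Z`, so `Z` lies on one
side of it. Since `∂(Z)` is tight, every perfect matching of `G` contracts to a perfect matching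
of `G/Z`, which crosses the contracted cut at least as often; hence the width does not grow.
If `G` has no non-trivial tight cut, it is its own unique brick or brace.
-/

open SimpleGraph

/-- A graph is matching covered if it is connected and every edge lies in a
perfect matching. -/
def MatchingCovered {V : Type*} (G : SimpleGraph V) : Prop :=
  G.Connected ∧ ∀ e ∈ G.edgeSet, ∃ M : G.Subgraph, M.IsPerfectMatching ∧ e ∈ M.edgeSet

/-- The edge cut `∂(X)`: all edges of `G` with exactly one endpoint in `X`. -/
def cutEdges {V : Type*} (G : SimpleGraph V) (X : Set V) : Set (Sym2 V) :=
  {e | e ∈ G.edgeSet ∧ ∃ u v, e = s(u, v) ∧ u ∈ X ∧ v ∉ X}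

/-- The matching porosity of the cut `∂(X)`: the maximum number of edges of a
perfect matching of `G` crossing the cut. -/
noncomputable def matchingPorosity {V : Type*} (G : SimpleGraph V) (X : Set V) : ℕ :=
  sSup {n | ∃ M : G.Subgraph, M.IsPerfectMatching ∧ n = (M.edgeSet ∩ cutEdges G X).ncard}

/-- A cut is tight if every perfect matching contains exactly one of its edges. -/
def IsTightCut {V : Type*} (G : SimpleGraph V) (X : Set V) : Prop :=
  ∀ M : G.Subgraph, M.IsPerfectMatching → (M.edgeSet ∩ cutEdges G X).ncard = 1

/-- A tight cut is non-trivial if both shores have at least two vertices. -/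
def IsNontrivialTightCut {V : Type*} (G : SimpleGraph V) (X : Set V) : Prop :=
  IsTightCut G X ∧ 2 ≤ X.ncard ∧ 2 ≤ Xᶜ.ncard

/-- `A`, `B` form a bipartition of `G` into its two colour classes. -/
def IsBipartitionOf {V : Type*} (G : SimpleGraph V) (A B : Set V) : Prop :=
  A ∪ B = Set.univ ∧ Disjoint A B ∧
    ∀ ⦃u v⦄, G.Adj u v → (u ∈ A ∧ v ∈ B) ∨ (u ∈ B ∧ v ∈ A)

/-- A brace with colour classes `A` and `B`: a bipartite matching covered graph
without non-trivial tight cuts. -/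
def IsBraceWith {V : Type*} (G : SimpleGraph V) (A B : Set V) : Prop :=
  MatchingCovered G ∧ IsBipartitionOf G A B ∧ ∀ X : Set V, ¬ IsNontrivialTightCut G X

/-- The degree of a vertex, as the cardinality of its neighbour set. -/
noncomputable def ndeg {W : Type*} (T : SimpleGraph W) (v : W) : ℕ :=
  (T.neighborSet v).ncard

/-- A cubic tree: a tree all of whose vertices have degree 1 or 3. -/
def IsCubicTree {W : Type*} (T : SimpleGraph W) : Prop :=
  T.IsTree ∧ ∀ v, ndeg T v = 1 ∨ ndeg T v = 3

/-- The shore of the cut induced by the tree edge `t₁t₂`: all vertices of the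
graph mapped by `δ` to leaves of the component of `T - t₁t₂` containing `t₁`. -/
def treeShore {U W : Type*} (T : SimpleGraph W) (δ : U → W) (t₁ t₂ : W) : Set U :=
  {v | (T.deleteEdges {s(t₁, t₂)}).Reachable (δ v) t₁}

/-- The set of leaves of `T` contained in the component of `T - t₁t₂`
containing `t₁`. -/
def sideLeaves {W : Type*} (T : SimpleGraph W) (t₁ t₂ : W) : Set W :=
  {t | ndeg T t = 1 ∧ (T.deleteEdges {s(t₁, t₂)}).Reachable t t₁}

/-- An odd edge of a cubic tree: an edge of the spine (neither endpoint is a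
leaf) such that each of the two components of `T - e` contains an odd number of
leaves of `T`. -/
def IsOddEdge {W : Type*} (T : SimpleGraph W) (t₁ t₂ : W) : Prop :=
  T.Adj t₁ t₂ ∧ ndeg T t₁ ≠ 1 ∧ ndeg T t₂ ≠ 1 ∧
    Odd (sideLeaves T t₁ t₂).ncard ∧ Odd (sideLeaves T t₂ t₁).ncard

/-- The degree of a vertex within the spine of `T` (the tree `T` minus its
leaves): the number of its non-leaf neighbours. -/
noncomputable def spineDeg {W : Type*} (T : SimpleGraph W) (t : W) : ℕ :=
  {t' | T.Adj t t' ∧ ndeg T t' ≠ 1}.ncard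

/-- `(T, δ)` is a perfect matching decomposition of `G`: `T` is a cubic tree
and `δ` is a bijection between the leaves of `T` and the vertices of `G`. -/
def IsPMDecomp {V : Type*} (G : SimpleGraph V) {n : ℕ} (T : SimpleGraph (Fin n))
    (δ : V → Fin n) : Prop :=
  IsCubicTree T ∧ Function.Injective δ ∧ (∀ v, ndeg T (δ v) = 1) ∧
    ∀ t, ndeg T t = 1 → ∃ v, δ v = t

/-- The width of a PM-decomposition: the maximum matching porosity of a cut
induced by an edge of the tree. -/
noncomputable def decompWidth {V : Type*} (G : SimpleGraph V) {n : ℕ}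
    (T : SimpleGraph (Fin n)) (δ : V → Fin n) : ℕ :=
  sSup {k | ∃ t₁ t₂, T.Adj t₁ t₂ ∧ k = matchingPorosity G (treeShore T δ t₁ t₂)}

/-- The perfect matching width of `G`: the minimum width of a perfect matching
decomposition of `G`. -/
noncomputable def pmw {V : Type*} (G : SimpleGraph V) : ℕ :=
  sInf {k | ∃ (n : ℕ) (T : SimpleGraph (Fin n)) (δ : V → Fin n),
    IsPMDecomp G T δ ∧ decompWidth G T δ = k}

instance optionFinite {α : Type*} [Finite α] : Finite (Option α) := by
  have := Fintype.ofFinite α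
  infer_instance

/-- The tight cut contraction: identify the shore `Z` into a single contraction
vertex (represented by `none`) and delete parallel edges and loops. -/
def contractShore {V : Type*} (G : SimpleGraph V) (Z : Set V) :
    SimpleGraph (Option {v : V // v ∉ Z}) :=
  SimpleGraph.fromRel fun a b =>
    match a, b with
    | some u, some w => G.Adj u w
    | some u, none => ∃ z ∈ Z, G.Adj u z
    | _, _ => False

/-- A bundled finite simple graph. -/
structure FinGraph where
  {carrier : Type}
  [fin : Finite carrier]
  graph : SimpleGraph carrier

instance (G : FinGraph) : Finite G.carrier := G.fin

/-- `H` is one of the bricks and braces of `G`: one of the graphs obtained from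
`G` by iterated tight cut contractions along non-trivial tight cuts, until no
non-trivial tight cut remains. -/
inductive IsBrickOrBraceOf : FinGraph → FinGraph → Prop
  | base (G : FinGraph) (h : ∀ Z : Set G.carrier, ¬ IsNontrivialTightCut G.graph Z) :
      IsBrickOrBraceOf G G
  | step (H G : FinGraph) (Z : Set G.carrier) (h : IsNontrivialTightCut G.graph Z)
      (h2 : IsBrickOrBraceOf H ⟨contractShore G.graph Z⟩) : IsBrickOrBraceOf H G

namespace SimpleGraph

variable {V W : Type*} {G : SimpleGraph V} {H : SimpleGraph W}

lemma Reachable.of_map_adj_or_eq (φ : V → W)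
    (hφ : ∀ ⦃u v⦄, G.Adj u v → φ u = φ v ∨ H.Adj (φ u) (φ v)) {u v : V}
    (h : G.Reachable u v) : H.Reachable (φ u) (φ v) := by
  obtain ⟨p⟩ := h
  induction p with
  | nil => rfl
  | cons huw _ ih => exact (hφ huw).elim (fun h => h ▸ ih) (fun h => h.reachable.trans ih)

lemma Reachable.deleteEdges_or {v x : V} (y : V) (h : G.Reachable v x) :
    (G.deleteEdges {s(x, y)}).Reachable v x ∨ (G.deleteEdges {s(x, y)}).Reachable v y := by
  obtain ⟨p⟩ := h
  induction p with
  | nil => exact .inl .rfl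
  | @cons u w z huw _ ih =>
    by_cases he : s(u, w) = s(z, y)
    · rcases Sym2.eq_iff.mp he with ⟨rfl, -⟩ | ⟨rfl, -⟩
      exacts [.inl .rfl, .inr .rfl]
    · have huw' : (G.deleteEdges {s(z, y)}).Adj u w := by simp [huw, he]
      exact ih.imp huw'.reachable.trans huw'.reachable.trans

/-- `π` contracts some edges of `G` and maps the other ones to edges of `H`; its section `ι`
is a homomorphism `H →g G` through which every edge not contracted by `π` factors. -/
structure IsContraction (G : SimpleGraph V) (H : SimpleGraph W) (π : V → W) (ι : W → V) :
    Prop where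
  map_adj : ∀ ⦃u v⦄, G.Adj u v → π u = π v ∨ H.Adj (π u) (π v)
  eq_section : ∀ ⦃u v⦄, G.Adj u v → π u ≠ π v → u = ι (π u)
  section_adj : ∀ ⦃a b⦄, H.Adj a b → G.Adj (ι a) (ι b)
  retract : ∀ a, π (ι a) = a

lemma Iso.isContraction (σ : G ≃g H) : IsContraction G H σ σ.symm where
  map_adj _ _ h := .inr (σ.map_adj_iff.mpr h)
  eq_section u _ _ _ := (σ.symm_apply_apply u).symm
  section_adj _ _ h := σ.symm.map_adj_iff.mpr h
  retract := σ.apply_symm_apply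

namespace IsContraction

variable {π : V → W} {ι : W → V} (hc : IsContraction G H π ι) {u v x y : V}
include hc

lemma section_injective : Function.Injective ι :=
  Function.LeftInverse.injective hc.retract

lemma adj_of_ne (huv : G.Adj u v) (hne : π u ≠ π v) : H.Adj (π u) (π v) :=
  (hc.map_adj huv).resolve_left hne

lemma sym2_eq_map_section (huv : G.Adj u v) (hne : π u ≠ π v) :
    s(u, v) = Sym2.map ι s(π u, π v) := by
  rw [Sym2.map_mk, ← hc.eq_section huv hne, ← hc.eq_section huv.symm hne.symm]

lemma map_deleteEdges_adj (hxy : G.Adj x y) (hne : π x ≠ π y)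
    (huv : (G.deleteEdges {s(x, y)}).Adj u v) :
    π u = π v ∨ (H.deleteEdges {s(π x, π y)}).Adj (π u) (π v) := by
  simp only [SimpleGraph.deleteEdges_adj, Set.mem_singleton_iff] at huv ⊢
  refine (hc.map_adj huv.1).imp_right fun hadj => ⟨hadj, fun he => huv.2 ?_⟩
  rw [hc.sym2_eq_map_section huv.1 hadj.ne, hc.sym2_eq_map_section hxy hne, he]

lemma reachable_deleteEdges (hxy : G.Adj x y) (hne : π x ≠ π y)
    (h : (G.deleteEdges {s(x, y)}).Reachable u v) :
    (H.deleteEdges {s(π x, π y)}).Reachable (π u) (π v) :=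
  h.of_map_adj_or_eq π fun _ _ => hc.map_deleteEdges_adj hxy hne

lemma not_reachable_deleteEdges_image (hH : H.IsAcyclic) (hxy : G.Adj x y) (hne : π x ≠ π y) :
    ¬ (H.deleteEdges {s(π x, π y)}).Reachable (π x) (π y) :=
  isBridge_iff.mp (isAcyclic_iff_forall_adj_isBridge.mp hH (hc.adj_of_ne hxy hne))

lemma isBridge (hH : H.IsAcyclic) (hxy : G.Adj x y) (hne : π x ≠ π y) : G.IsBridge s(x, y) :=
  isBridge_iff.mpr fun h =>
    hc.not_reachable_deleteEdges_image hH hxy hne (hc.reachable_deleteEdges hxy hne h)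

lemma reachable_deleteEdges_iff (hG : G.Connected) (hH : H.IsAcyclic) (hxy : G.Adj x y)
    (hne : π x ≠ π y) (v : V) :
    (G.deleteEdges {s(x, y)}).Reachable v x ↔
      (H.deleteEdges {s(π x, π y)}).Reachable (π v) (π x) := by
  refine ⟨hc.reachable_deleteEdges hxy hne, fun h => ?_⟩
  refine ((hG.preconnected v x).deleteEdges_or y).resolve_right fun hvy => ?_
  exact hc.not_reachable_deleteEdges_image hH hxy hne
    (h.symm.trans (hc.reachable_deleteEdges hxy hne hvy))

lemma treeShore_eq {U U' : Type*} {δ : U → V} {δ' : U' → W} {ρ : U → U'}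
    (hδ : ∀ w, π (δ w) = δ' (ρ w)) (hG : G.Connected) (hH : H.IsAcyclic) (hxy : G.Adj x y)
    (hne : π x ≠ π y) : treeShore G δ x y = ρ ⁻¹' treeShore H δ' (π x) (π y) := by
  ext w
  simp only [treeShore, Set.mem_ofPred_eq, Set.mem_preimage, ← hδ]
  exact hc.reachable_deleteEdges_iff hG hH hxy hne (δ w)

lemma neighborSet_section {a : W} (h : ∀ w, G.Adj (ι a) w → π w ≠ a) :
    G.neighborSet (ι a) = ι '' H.neighborSet a := by
  ext w
  refine ⟨fun hw => ?_, fun ⟨b, hb, hbw⟩ => hbw ▸ hc.section_adj hb⟩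
  have hne : π (ι a) ≠ π w := (hc.retract a).symm ▸ (h w hw).symm
  refine ⟨π w, ?_, (hc.eq_section hw.symm hne.symm).symm⟩
  simpa only [mem_neighborSet, hc.retract] using hc.adj_of_ne hw hne

lemma ndeg_section {a : W} (h : ∀ w, G.Adj (ι a) w → π w ≠ a) :
    ndeg G (ι a) = ndeg H a := by
  rw [ndeg, hc.neighborSet_section h, Set.ncard_image_of_injective _ hc.section_injective, ndeg]

lemma reachable_section {a b : W} (h : H.Reachable a b) : G.Reachable (ι a) (ι b) :=
  h.map ⟨ι, fun hab => hc.section_adj hab⟩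

end IsContraction

lemma Iso.ndeg_symm_apply (σ : G ≃g H) (a : W) : ndeg G (σ.symm a) = ndeg H a :=
  σ.isContraction.ndeg_section fun w hw => by simpa using (σ.map_adj_iff.mpr hw).ne'

end SimpleGraph

section PMTree

variable {U V W W' : Type*}

/-- `IsPMDecomp`, and below `decompWidth`, with the tree on an arbitrary vertex type, such as the
sum types produced by gluing. -/
def IsPMTree (T : SimpleGraph W) (δ : V → W) : Prop :=
  IsCubicTree T ∧ Function.Injective δ ∧ (∀ v, ndeg T (δ v) = 1) ∧
    ∀ t, ndeg T t = 1 → ∃ v, δ v = t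

noncomputable def decompWidthOn (G : SimpleGraph V) (T : SimpleGraph W) (δ : V → W) : ℕ :=
  sSup {k | ∃ t₁ t₂, T.Adj t₁ t₂ ∧ k = matchingPorosity G (treeShore T δ t₁ t₂)}

lemma decompWidthOn_le_iff [Finite W] {G : SimpleGraph V} {T : SimpleGraph W} {δ : V → W}
    {m : ℕ} : decompWidthOn G T δ ≤ m ↔
      ∀ x y, T.Adj x y → matchingPorosity G (treeShore T δ x y) ≤ m := by
  have hbdd : BddAbove
      {k | ∃ t₁ t₂, T.Adj t₁ t₂ ∧ k = matchingPorosity G (treeShore T δ t₁ t₂)} :=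
    ((Set.finite_range fun t : W × W => matchingPorosity G (treeShore T δ t.1 t.2)).subset
      (by rintro _ ⟨t₁, t₂, -, rfl⟩; exact ⟨(t₁, t₂), rfl⟩)).bddAbove
  rw [decompWidthOn, csSup_le_iff' hbdd]
  exact ⟨fun h x y hxy => h _ ⟨x, y, hxy, rfl⟩, fun h _ ⟨x, y, hxy, hk⟩ => hk ▸ h x y hxy⟩

lemma treeShore_comp (T : SimpleGraph W) (δ : V → W) (f : U → V) (x y : W) :
    treeShore T (δ ∘ f) x y = f ⁻¹' treeShore T δ x y := rfl

namespace IsPMTree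

variable {T : SimpleGraph W} {δ : V → W}

lemma injective (h : IsPMTree T δ) : Function.Injective δ := h.2.1

lemma exists_neighborSet_eq (h : IsPMTree T δ) (v : V) :
    ∃ s : {t // t ≠ δ v}, T.neighborSet (δ v) = {s.1} := by
  obtain ⟨s, hs⟩ := Set.ncard_eq_one.mp (h.2.2.1 v)
  have hadj : s ∈ T.neighborSet (δ v) := hs ▸ Set.mem_singleton s
  exact ⟨⟨s, (show T.Adj (δ v) s from hadj).ne'⟩, hs⟩

lemma comp_equiv (h : IsPMTree T δ) (e : U ≃ V) : IsPMTree T (δ ∘ e) := by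
  obtain ⟨hT, hinj, hleaf, hsurj⟩ := h
  refine ⟨hT, hinj.comp e.injective, fun u => hleaf (e u), fun t ht => ?_⟩
  obtain ⟨v, rfl⟩ := hsurj t ht
  exact ⟨e.symm v, by simp⟩

lemma map_iso (h : IsPMTree T δ) {T' : SimpleGraph W'} (σ : T ≃g T') :
    IsPMTree T' (σ ∘ δ) := by
  obtain ⟨⟨hT, hdeg⟩, hinj, hleaf, hsurj⟩ := h
  refine ⟨⟨σ.isTree_iff.mp hT, fun t => σ.ndeg_symm_apply t ▸ hdeg _⟩, σ.injective.comp hinj,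
    fun v => ?_, fun t ht => ?_⟩
  · rw [Function.comp_apply, ← σ.ndeg_symm_apply, σ.symm_apply_apply, hleaf]
  · obtain ⟨v, hv⟩ := hsurj (σ.symm t) (σ.ndeg_symm_apply t ▸ ht)
    exact ⟨v, by simp [hv]⟩

lemma exists_isPMDecomp [Finite W] (h : IsPMTree T δ) (G : SimpleGraph V) :
    ∃ (n : ℕ) (T' : SimpleGraph (Fin n)) (δ' : V → Fin n),
      IsPMDecomp G T' δ' ∧ decompWidth G T' δ' ≤ decompWidthOn G T δ := by
  let σ := Iso.map (Finite.equivFin W) T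
  refine ⟨_, _, σ ∘ δ, h.map_iso σ, decompWidthOn_le_iff.mpr fun a b hab => ?_⟩
  have hT : T.IsTree := h.1.1
  rw [σ.symm.isContraction.treeShore_eq (δ' := δ) (ρ := id) (by simp)
    (σ.isTree_iff.mp hT).connected hT.isAcyclic hab (σ.symm.injective.ne hab.ne),
    Set.preimage_id]
  exact decompWidthOn_le_iff.mp le_rfl _ _ (σ.symm.map_adj_iff.mpr hab)

lemma pmw_le [Finite W] (h : IsPMTree T δ) (G : SimpleGraph V) :
    pmw G ≤ decompWidthOn G T δ := by
  obtain ⟨n, T', δ', hd, hw⟩ := h.exists_isPMDecomp G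
  calc pmw G ≤ decompWidth G T' δ' := Nat.sInf_le ⟨n, T', δ', hd, rfl⟩
    _ ≤ decompWidthOn G T δ := hw

lemma exists_decompWidthOn_eq_pmw [Finite W] (h : IsPMTree T δ) (G : SimpleGraph V) :
    ∃ (n : ℕ) (T' : SimpleGraph (Fin n)) (δ' : V → Fin n),
      IsPMTree T' δ' ∧ decompWidthOn G T' δ' = pmw G := by
  obtain ⟨n, T', δ', hd, -⟩ := h.exists_isPMDecomp G
  have hne : {k | ∃ (n : ℕ) (T : SimpleGraph (Fin n)) (δ : V → Fin n),
      IsPMDecomp G T δ ∧ decompWidth G T δ = k}.Nonempty := ⟨_, n, T', δ', hd, rfl⟩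
  exact Nat.sInf_mem hne

end IsPMTree

end PMTree

section Glue

variable {W₁ W₂ : Type*} (T₁ : SimpleGraph W₁) (T₂ : SimpleGraph W₂) (ℓ₁ : W₁) (ℓ₂ : W₂)

abbrev GlueVertex : Type _ := {a // a ≠ ℓ₁} ⊕ {b // b ≠ ℓ₂}

/-- Delete `ℓ₁` from `T₁` and `ℓ₂` from `T₂` and join every neighbour of `ℓ₁` to every
neighbour of `ℓ₂`: for two leaves, the two leaf edges merge into a single edge. -/
def glue : SimpleGraph (GlueVertex ℓ₁ ℓ₂) where
  Adj
    | .inl a, .inl a' => T₁.Adj a a'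
    | .inr b, .inr b' => T₂.Adj b b'
    | .inl a, .inr b | .inr b, .inl a => T₁.Adj a ℓ₁ ∧ T₂.Adj b ℓ₂
  symm := ⟨by rintro (a | b) (a' | b') h <;> first | exact h.symm | exact h⟩
  loopless := ⟨by rintro (a | b) h <;> exact SimpleGraph.irrefl _ h⟩

def glueProj₁ : GlueVertex ℓ₁ ℓ₂ → W₁ := Sum.elim Subtype.val fun _ => ℓ₁

def glueProj₂ : GlueVertex ℓ₁ ℓ₂ → W₂ := Sum.elim (fun _ => ℓ₂) Subtype.val

open Classical in
noncomputable def glueSection₁ (s₂ : {b // b ≠ ℓ₂}) (a : W₁) : GlueVertex ℓ₁ ℓ₂ :=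
  if h : a = ℓ₁ then .inr s₂ else .inl ⟨a, h⟩

open Classical in
noncomputable def glueSection₂ (s₁ : {a // a ≠ ℓ₁}) (b : W₂) : GlueVertex ℓ₁ ℓ₂ :=
  if h : b = ℓ₂ then .inl s₁ else .inr ⟨b, h⟩

variable {T₁ T₂ ℓ₁ ℓ₂}

@[simp] lemma glue_adj_inl_inl {a a' : {a // a ≠ ℓ₁}} :
    (glue T₁ T₂ ℓ₁ ℓ₂).Adj (.inl a) (.inl a') ↔ T₁.Adj a a' := .rfl

@[simp] lemma glue_adj_inr_inr {b b' : {b // b ≠ ℓ₂}} :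
    (glue T₁ T₂ ℓ₁ ℓ₂).Adj (.inr b) (.inr b') ↔ T₂.Adj b b' := .rfl

@[simp] lemma glue_adj_inl_inr {a : {a // a ≠ ℓ₁}} {b : {b // b ≠ ℓ₂}} :
    (glue T₁ T₂ ℓ₁ ℓ₂).Adj (.inl a) (.inr b) ↔ T₁.Adj a ℓ₁ ∧ T₂.Adj b ℓ₂ := .rfl

@[simp] lemma glue_adj_inr_inl {a : {a // a ≠ ℓ₁}} {b : {b // b ≠ ℓ₂}} :
    (glue T₁ T₂ ℓ₁ ℓ₂).Adj (.inr b) (.inl a) ↔ T₁.Adj a ℓ₁ ∧ T₂.Adj b ℓ₂ := .rfl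

@[simp] lemma glueProj₁_inl (a : {a // a ≠ ℓ₁}) :
    glueProj₁ ℓ₁ ℓ₂ (.inl a) = a := rfl

@[simp] lemma glueProj₁_inr (b : {b // b ≠ ℓ₂}) :
    glueProj₁ ℓ₁ ℓ₂ (.inr b) = ℓ₁ := rfl

@[simp] lemma glueProj₂_inl (a : {a // a ≠ ℓ₁}) :
    glueProj₂ ℓ₁ ℓ₂ (.inl a) = ℓ₂ := rfl

@[simp] lemma glueProj₂_inr (b : {b // b ≠ ℓ₂}) :
    glueProj₂ ℓ₁ ℓ₂ (.inr b) = b := rfl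

lemma glueSection₁_of_ne {a : W₁} (h : a ≠ ℓ₁) (s₂ : {b // b ≠ ℓ₂}) :
    glueSection₁ ℓ₁ ℓ₂ s₂ a = .inl ⟨a, h⟩ := dif_neg h

lemma glueSection₂_of_ne {b : W₂} (h : b ≠ ℓ₂) (s₁ : {a // a ≠ ℓ₁}) :
    glueSection₂ ℓ₁ ℓ₂ s₁ b = .inr ⟨b, h⟩ := dif_neg h

lemma isContraction_glueProj₁ {s₂ : {b // b ≠ ℓ₂}} (hs₂ : T₂.neighborSet ℓ₂ = {s₂.1}) :
    IsContraction (glue T₁ T₂ ℓ₁ ℓ₂) T₁ (glueProj₁ ℓ₁ ℓ₂) (glueSection₁ ℓ₁ ℓ₂ s₂) := by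
  have hleaf : ∀ b : {b // b ≠ ℓ₂}, T₂.Adj b ℓ₂ → b = s₂ := fun b hb =>
    Subtype.ext (Set.mem_singleton_iff.mp (hs₂ ▸ hb.symm))
  refine ⟨?_, ?_, fun a a' h => ?_, fun a => ?_⟩
  · rintro (a | b) (a' | b') h
    exacts [.inr h, .inr h.1, .inr h.1.symm, .inl rfl]
  · rintro (a | b) (a' | b') h hne
    · exact (glueSection₁_of_ne a.2 s₂).symm
    · exact (glueSection₁_of_ne a.2 s₂).symm
    · simp [glueSection₁, hleaf b h.2]
    · exact absurd rfl hne
  · have hs₂ℓ : T₂.Adj s₂ ℓ₂ :=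
      (hs₂ ▸ Set.mem_singleton s₂.1 : s₂.1 ∈ T₂.neighborSet ℓ₂).symm
    by_cases ha : a = ℓ₁ <;> by_cases ha' : a' = ℓ₁
    · exact absurd (ha.trans ha'.symm) h.ne
    · subst ha; simp [glueSection₁, ha', h.symm, hs₂ℓ]
    · subst ha'; simp [glueSection₁, ha, h, hs₂ℓ]
    · simpa [glueSection₁, ha, ha'] using h
  · by_cases ha : a = ℓ₁ <;> simp [glueSection₁, ha]

lemma isContraction_glueProj₂ {s₁ : {a // a ≠ ℓ₁}} (hs₁ : T₁.neighborSet ℓ₁ = {s₁.1}) :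
    IsContraction (glue T₁ T₂ ℓ₁ ℓ₂) T₂ (glueProj₂ ℓ₁ ℓ₂) (glueSection₂ ℓ₁ ℓ₂ s₁) := by
  have hleaf : ∀ a : {a // a ≠ ℓ₁}, T₁.Adj a ℓ₁ → a = s₁ := fun a ha =>
    Subtype.ext (Set.mem_singleton_iff.mp (hs₁ ▸ ha.symm))
  refine ⟨?_, ?_, fun b b' h => ?_, fun b => ?_⟩
  · rintro (a | b) (a' | b') h
    exacts [.inl rfl, .inr h.2.symm, .inr h.2, .inr h]
  · rintro (a | b) (a' | b') h hne
    · exact absurd rfl hne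
    · simp [glueSection₂, hleaf a h.1]
    · exact (glueSection₂_of_ne b.2 s₁).symm
    · exact (glueSection₂_of_ne b.2 s₁).symm
  · have hs₁ℓ : T₁.Adj s₁ ℓ₁ :=
      (hs₁ ▸ Set.mem_singleton s₁.1 : s₁.1 ∈ T₁.neighborSet ℓ₁).symm
    by_cases hb : b = ℓ₂ <;> by_cases hb' : b' = ℓ₂
    · exact absurd (hb.trans hb'.symm) h.ne
    · subst hb; simp [glueSection₂, hb', h.symm, hs₁ℓ]
    · subst hb'; simp [glueSection₂, hb, h, hs₁ℓ]
    · simpa [glueSection₂, hb, hb'] using h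
  · by_cases hb : b = ℓ₂ <;> simp [glueSection₂, hb]

lemma glueProj_ne_of_adj {x y : GlueVertex ℓ₁ ℓ₂} (h : (glue T₁ T₂ ℓ₁ ℓ₂).Adj x y) :
    glueProj₁ ℓ₁ ℓ₂ x ≠ glueProj₁ ℓ₁ ℓ₂ y ∨ glueProj₂ ℓ₁ ℓ₂ x ≠ glueProj₂ ℓ₁ ℓ₂ y := by
  rcases x with a | b <;> rcases y with a' | b'
  exacts [.inl (show T₁.Adj a a' from h).ne, .inl a.2, .inl (Ne.symm a'.2),
    .inr (show T₂.Adj b b' from h).ne]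

variable {s₁ : {a // a ≠ ℓ₁}} {s₂ : {b // b ≠ ℓ₂}}

lemma isTree_glue (hT₁ : T₁.IsTree) (hT₂ : T₂.IsTree) (hs₁ : T₁.neighborSet ℓ₁ = {s₁.1})
    (hs₂ : T₂.neighborSet ℓ₂ = {s₂.1}) : (glue T₁ T₂ ℓ₁ ℓ₂).IsTree := by
  have hc₁ := isContraction_glueProj₁ (T₁ := T₁) (ℓ₁ := ℓ₁) hs₂
  have hc₂ := isContraction_glueProj₂ (T₂ := T₂) (ℓ₂ := ℓ₂) hs₁
  refine { connected := (connected_iff_exists_forall_reachable _).mpr ⟨.inr s₂, ?_⟩,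
           isAcyclic := ?_ }
  · rintro (a | b)
    · simpa [glueSection₁, a.2] using hc₁.reachable_section (hT₁.connected ℓ₁ a)
    · simpa [glueSection₂, b.2, s₂.2] using hc₂.reachable_section (hT₂.connected s₂ b)
  · exact isAcyclic_iff_forall_adj_isBridge.mpr fun x y h => (glueProj_ne_of_adj h).elim
      (hc₁.isBridge hT₁.isAcyclic h) (hc₂.isBridge hT₂.isAcyclic h)

lemma ndeg_glue_inl (hs₂ : T₂.neighborSet ℓ₂ = {s₂.1}) (a : {a // a ≠ ℓ₁}) :
    ndeg (glue T₁ T₂ ℓ₁ ℓ₂) (.inl a) = ndeg T₁ a := by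
  rw [← glueSection₁_of_ne a.2 s₂]
  refine (isContraction_glueProj₁ hs₂).ndeg_section ?_
  rw [glueSection₁_of_ne a.2 s₂]
  rintro (a' | b) h
  exacts [(show T₁.Adj a a' from h).ne', Ne.symm a.2]

lemma ndeg_glue_inr (hs₁ : T₁.neighborSet ℓ₁ = {s₁.1}) (b : {b // b ≠ ℓ₂}) :
    ndeg (glue T₁ T₂ ℓ₁ ℓ₂) (.inr b) = ndeg T₂ b := by
  rw [← glueSection₂_of_ne b.2 s₁]
  refine (isContraction_glueProj₂ hs₁).ndeg_section ?_
  rw [glueSection₂_of_ne b.2 s₁]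
  rintro (a | b') h
  exacts [Ne.symm b.2, (show T₂.Adj b b' from h).ne']

end Glue

section GlueDecomp

variable {A B W₁ W₂ : Type*} {T₁ : SimpleGraph W₁} {T₂ : SimpleGraph W₂}
  {δ₁ : Option A → W₁} {δ₂ : Option B → W₂}

def glueLeaf (hδ₁ : Function.Injective δ₁) (hδ₂ : Function.Injective δ₂) :
    A ⊕ B → GlueVertex (δ₁ none) (δ₂ none) :=
  Sum.map (fun a => ⟨δ₁ a, hδ₁.ne (Option.some_ne_none a)⟩)
    (fun b => ⟨δ₂ b, hδ₂.ne (Option.some_ne_none b)⟩)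

variable {hδ₁ : Function.Injective δ₁} {hδ₂ : Function.Injective δ₂}

lemma glueProj₁_glueLeaf (x : A ⊕ B) :
    glueProj₁ (δ₁ none) (δ₂ none) (glueLeaf hδ₁ hδ₂ x) = δ₁ x.getLeft? := by
  cases x <;> rfl

lemma glueProj₂_glueLeaf (x : A ⊕ B) :
    glueProj₂ (δ₁ none) (δ₂ none) (glueLeaf hδ₁ hδ₂ x) = δ₂ x.getRight? := by
  cases x <;> rfl

theorem IsPMTree.glue (h₁ : IsPMTree T₁ δ₁) (h₂ : IsPMTree T₂ δ₂) :
    IsPMTree (glue T₁ T₂ (δ₁ none) (δ₂ none)) (glueLeaf h₁.injective h₂.injective) := by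
  obtain ⟨s₁, hs₁⟩ := h₁.exists_neighborSet_eq none
  obtain ⟨s₂, hs₂⟩ := h₂.exists_neighborSet_eq none
  obtain ⟨⟨hT₁, hdeg₁⟩, hinj₁, hleaf₁, hsurj₁⟩ := h₁
  obtain ⟨⟨hT₂, hdeg₂⟩, hinj₂, hleaf₂, hsurj₂⟩ := h₂
  refine ⟨⟨isTree_glue hT₁ hT₂ hs₁ hs₂, ?_⟩, ?_, ?_, ?_⟩
  · rintro (a | b)
    · exact ndeg_glue_inl hs₂ a ▸ hdeg₁ a
    · exact ndeg_glue_inr hs₁ b ▸ hdeg₂ b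
  · refine Sum.map_injective.mpr ⟨fun a a' h => ?_, fun b b' h => ?_⟩
    · exact Option.some_injective _ (hinj₁ (congrArg Subtype.val h))
    · exact Option.some_injective _ (hinj₂ (congrArg Subtype.val h))
  · rintro (a | b)
    · exact (ndeg_glue_inl hs₂ _).trans (hleaf₁ a)
    · exact (ndeg_glue_inr hs₁ _).trans (hleaf₂ b)
  · rintro (a | b) ht
    · obtain ⟨_ | a', ha'⟩ := hsurj₁ a (ndeg_glue_inl hs₂ a ▸ ht)
      · exact absurd ha'.symm a.2
      · exact ⟨.inl a', congrArg Sum.inl (Subtype.ext ha')⟩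
    · obtain ⟨_ | b', hb'⟩ := hsurj₂ b (ndeg_glue_inr hs₁ b ▸ ht)
      · exact absurd hb'.symm b.2
      · exact ⟨.inr b', congrArg Sum.inr (Subtype.ext hb')⟩

theorem treeShore_glue (h₁ : IsPMTree T₁ δ₁) (h₂ : IsPMTree T₂ δ₂)
    {x y : GlueVertex (δ₁ none) (δ₂ none)}
    (hxy : (glue T₁ T₂ (δ₁ none) (δ₂ none)).Adj x y) :
    (∃ a b, T₁.Adj a b ∧
      treeShore (glue T₁ T₂ (δ₁ none) (δ₂ none)) (glueLeaf h₁.injective h₂.injective) x y =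
        Sum.getLeft? ⁻¹' treeShore T₁ δ₁ a b) ∨
    (∃ a b, T₂.Adj a b ∧
      treeShore (glue T₁ T₂ (δ₁ none) (δ₂ none)) (glueLeaf h₁.injective h₂.injective) x y =
        Sum.getRight? ⁻¹' treeShore T₂ δ₂ a b) := by
  obtain ⟨s₁, hs₁⟩ := h₁.exists_neighborSet_eq none
  obtain ⟨s₂, hs₂⟩ := h₂.exists_neighborSet_eq none
  have hT := (h₁.glue h₂).1.1
  rcases glueProj_ne_of_adj hxy with hne | hne
  · have hc := isContraction_glueProj₁ (T₁ := T₁) (ℓ₁ := δ₁ none) hs₂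
    exact .inl ⟨_, _, hc.adj_of_ne hxy hne,
      hc.treeShore_eq glueProj₁_glueLeaf hT.connected h₁.1.1.isAcyclic hxy hne⟩
  · have hc := isContraction_glueProj₂ (T₂ := T₂) (ℓ₂ := δ₂ none) hs₁
    exact .inr ⟨_, _, hc.adj_of_ne hxy hne,
      hc.treeShore_eq glueProj₂_glueLeaf hT.connected h₂.1.1.isAcyclic hxy hne⟩

theorem decompWidthOn_glue_le [Finite W₁] [Finite W₂] {V : Type*} {G : SimpleGraph V}
    {G₁ : SimpleGraph (Option A)} {G₂ : SimpleGraph (Option B)}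
    (h₁ : IsPMTree T₁ δ₁) (h₂ : IsPMTree T₂ δ₂) (e : V ≃ A ⊕ B)
    (hG₁ : ∀ S, matchingPorosity G ((Sum.getLeft? ∘ e) ⁻¹' S) ≤ matchingPorosity G₁ S)
    (hG₂ : ∀ S, matchingPorosity G ((Sum.getRight? ∘ e) ⁻¹' S) ≤ matchingPorosity G₂ S) :
    decompWidthOn G (glue T₁ T₂ (δ₁ none) (δ₂ none))
        (glueLeaf h₁.injective h₂.injective ∘ e) ≤
      max (decompWidthOn G₁ T₁ δ₁) (decompWidthOn G₂ T₂ δ₂) := by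
  refine decompWidthOn_le_iff.mpr fun x y hxy => ?_
  rw [treeShore_comp]
  rcases treeShore_glue h₁ h₂ hxy with ⟨a, b, hab, hS⟩ | ⟨a, b, hab, hS⟩ <;> rw [hS]
  · exact (hG₁ _).trans ((decompWidthOn_le_iff.mp le_rfl a b hab).trans (le_max_left _ _))
  · exact (hG₂ _).trans ((decompWidthOn_le_iff.mp le_rfl a b hab).trans (le_max_right _ _))

end GlueDecomp

section Existence

lemma ndeg_starGraph_of_ne {V : Type*} {r v : V} (h : v ≠ r) : ndeg (starGraph r) v = 1 := by
  have hv : (starGraph r).neighborSet v = {r} := by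
    ext w
    simp only [mem_neighborSet, starGraph_adj, h, false_or, Set.mem_singleton_iff]
    exact ⟨And.right, fun hw => ⟨hw ▸ h, hw⟩⟩
  rw [ndeg, hv, Set.ncard_singleton]

lemma ndeg_starGraph_self {V : Type*} [Finite V] (r : V) :
    ndeg (starGraph r) r = Nat.card V - 1 := by
  have hr : (starGraph r).neighborSet r = {r}ᶜ := by ext; simp [eq_comm]
  have := Set.ncard_add_ncard_compl {r}
  rw [Set.ncard_singleton] at this
  rw [ndeg, hr]
  omega

lemma isPMTree_starGraph_of_card_eq_two {V : Type*} [Finite V] (hV : Nat.card V = 2) (r : V) :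
    IsPMTree (starGraph r) (id : V → V) := by
  have hdeg : ∀ v, ndeg (starGraph r) v = 1 := fun v => by
    obtain rfl | h := eq_or_ne v r
    · rw [ndeg_starGraph_self, hV]
    · exact ndeg_starGraph_of_ne h
  exact ⟨⟨isTree_starGraph r, fun v => .inl (hdeg v)⟩, Function.injective_id, hdeg,
    fun t _ => ⟨t, rfl⟩⟩

lemma isPMTree_claw : IsPMTree (starGraph (none : Option (Option Bool))) some := by
  have hcenter : ndeg (starGraph (none : Option (Option Bool))) none = 3 := by
    simp [ndeg_starGraph_self]
  have hleaf (v : Option Bool) : ndeg (starGraph none) (some v) = 1 :=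
    ndeg_starGraph_of_ne (Option.some_ne_none v)
  refine ⟨⟨isTree_starGraph _, fun v => ?_⟩, Option.some_injective _, hleaf, fun t ht => ?_⟩
  · cases v
    exacts [.inr hcenter, .inl (hleaf _)]
  · cases t with
    | none => exact absurd (hcenter.symm.trans ht) (by decide)
    | some v => exact ⟨v, rfl⟩

theorem exists_isPMTree {V : Type} [Finite V] (hV : 2 ≤ Nat.card V) :
    ∃ (W : Type) (_ : Finite W) (T : SimpleGraph W) (δ : V → W), IsPMTree T δ := by
  suffices ∀ n, 2 ≤ n → ∀ (V : Type) [Finite V], Nat.card V = n →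
      ∃ (W : Type) (_ : Finite W) (T : SimpleGraph W) (δ : V → W), IsPMTree T δ from
    this _ hV V rfl
  intro n hn
  induction n, hn using Nat.le_induction with
  | base =>
    intro V _ hV
    obtain ⟨r⟩ : Nonempty V := Finite.card_pos_iff.mp (by omega)
    exact ⟨V, inferInstance, _, _, isPMTree_starGraph_of_card_eq_two hV r⟩
  | succ n hn ih =>
    intro V _ hV
    obtain ⟨W, _, T, δ, h⟩ := ih (Option (Fin (n - 1))) (by simp; omega)
    obtain ⟨e⟩ : Nonempty (V ≃ Fin (n - 1) ⊕ Bool) := Finite.card_eq.mp (by simp; omega)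
    -- gluing a claw onto a leaf replaces it by two leaves
    exact ⟨_, inferInstance, _, _, (h.glue isPMTree_claw).comp_equiv e⟩

lemma exists_isPMTree_decompWidthOn_eq_pmw {U : Type} [Finite U] (H : SimpleGraph U)
    (hU : 2 ≤ Nat.card U) :
    ∃ (n : ℕ) (T : SimpleGraph (Fin n)) (δ : U → Fin n),
      IsPMTree T δ ∧ decompWidthOn H T δ = pmw H := by
  obtain ⟨W, _, T, δ, h⟩ := exists_isPMTree hU
  exact h.exists_decompWidthOn_eq_pmw H

end Existence

section Contraction

variable {V : Type*} {G : SimpleGraph V} {Z X : Set V} {M : G.Subgraph} {u v : V}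

lemma cutEdges_compl (G : SimpleGraph V) (X : Set V) : cutEdges G Xᶜ = cutEdges G X := by
  ext e
  constructor <;> rintro ⟨he, u, v, rfl, hu, hv⟩
  · exact ⟨he, v, u, Sym2.eq_swap, not_not.mp hv, hu⟩
  · exact ⟨he, v, u, Sym2.eq_swap, hv, not_not.mpr hu⟩

lemma matchingPorosity_compl : matchingPorosity G Xᶜ = matchingPorosity G X := by
  simp only [matchingPorosity, cutEdges_compl]

lemma IsTightCut.compl (h : IsTightCut G Z) : IsTightCut G Zᶜ :=
  fun M hM => cutEdges_compl G Z ▸ h M hM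

lemma IsNontrivialTightCut.compl (h : IsNontrivialTightCut G Z) : IsNontrivialTightCut G Zᶜ :=
  ⟨h.1.compl, h.2.2, (compl_compl Z).symm ▸ h.2.1⟩

lemma mem_edgeSet_inter_cutEdges {e : Sym2 V} :
    e ∈ M.edgeSet ∩ cutEdges G X ↔ ∃ u v, e = s(u, v) ∧ M.Adj u v ∧ u ∈ X ∧ v ∉ X := by
  constructor
  · rintro ⟨he, -, u, v, rfl, hu, hv⟩
    exact ⟨u, v, rfl, he, hu, hv⟩
  · rintro ⟨u, v, rfl, huv, hu, hv⟩
    exact ⟨huv, M.adj_sub huv, u, v, rfl, hu, hv⟩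

lemma matchingPorosity_le_iff [Finite V] {m : ℕ} : matchingPorosity G X ≤ m ↔
    ∀ M : G.Subgraph, M.IsPerfectMatching → (M.edgeSet ∩ cutEdges G X).ncard ≤ m := by
  have hbdd : BddAbove
      {n | ∃ M : G.Subgraph, M.IsPerfectMatching ∧ n = (M.edgeSet ∩ cutEdges G X).ncard} :=
    ((Set.finite_range fun M : G.Subgraph => (M.edgeSet ∩ cutEdges G X).ncard).subset
      (by rintro _ ⟨M, -, rfl⟩; exact ⟨M, rfl⟩)).bddAbove
  rw [matchingPorosity, csSup_le_iff' hbdd]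
  exact ⟨fun h M hM => h _ ⟨M, hM, rfl⟩, fun h _ ⟨M, hM, hn⟩ => hn ▸ h M hM⟩

open Classical in
/-- The vertex map of the contraction `contractShore G Z`. -/
noncomputable def shoreMap (Z : Set V) (v : V) : Option {v // v ∉ Z} :=
  if h : v ∈ Z then none else some ⟨v, h⟩

lemma shoreMap_of_mem (h : v ∈ Z) : shoreMap Z v = none := dif_pos h

lemma shoreMap_of_notMem (h : v ∉ Z) : shoreMap Z v = some ⟨v, h⟩ := dif_neg h

lemma shoreMap_eq_none_iff : shoreMap Z v = none ↔ v ∈ Z := by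
  by_cases h : v ∈ Z <;> simp [shoreMap, h]

lemma shoreMap_eq_some_iff {a : {v // v ∉ Z}} : shoreMap Z v = some a ↔ v = a := by
  by_cases h : v ∈ Z
  · simp only [shoreMap_of_mem h, reduceCtorEq, false_iff]
    exact fun hv => a.2 (hv ▸ h)
  · simp [shoreMap_of_notMem h, Subtype.ext_iff, eq_comm]

lemma contractShore_adj_shoreMap (huv : G.Adj u v) (hne : shoreMap Z u ≠ shoreMap Z v) :
    (contractShore G Z).Adj (shoreMap Z u) (shoreMap Z v) := by
  refine (fromRel_adj _ _ _).mpr ⟨hne, ?_⟩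
  by_cases hu : u ∈ Z <;> by_cases hv : v ∈ Z
  · exact absurd (by rw [shoreMap_of_mem hu, shoreMap_of_mem hv]) hne
  · rw [shoreMap_of_mem hu, shoreMap_of_notMem hv]
    exact .inr ⟨u, hu, huv.symm⟩
  · rw [shoreMap_of_notMem hu, shoreMap_of_mem hv]
    exact .inl ⟨v, hv, huv⟩
  · rw [shoreMap_of_notMem hu, shoreMap_of_notMem hv]
    exact .inl huv

def contractMatching (M : G.Subgraph) (Z : Set V) : (contractShore G Z).Subgraph where
  verts := Set.univ
  Adj a b := a ≠ b ∧ ∃ u v, M.Adj u v ∧ shoreMap Z u = a ∧ shoreMap Z v = b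
  adj_sub := by
    rintro _ _ ⟨hne, u, v, huv, rfl, rfl⟩
    exact contractShore_adj_shoreMap (M.adj_sub huv) hne
  edge_vert _ := Set.mem_univ _
  symm := ⟨by
    rintro _ _ ⟨hne, u, v, huv, rfl, rfl⟩
    exact ⟨hne.symm, v, u, huv.symm, rfl, rfl⟩⟩

lemma contractMatching_adj (huv : M.Adj u v) (hne : shoreMap Z u ≠ shoreMap Z v) :
    (contractMatching M Z).Adj (shoreMap Z u) (shoreMap Z v) :=
  ⟨hne, u, v, huv, rfl, rfl⟩

lemma IsTightCut.existsUnique_crossing (hZ : IsTightCut G Z) (hM : M.IsPerfectMatching) :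
    ∃ u ∉ Z, (∃ z ∈ Z, M.Adj u z) ∧ ∀ u' ∉ Z, ∀ z ∈ Z, M.Adj u' z → u' = u := by
  obtain ⟨e, he⟩ := Set.ncard_eq_one.mp (hZ M hM)
  obtain ⟨z, u, rfl, hzu, hz, hu⟩ :=
    mem_edgeSet_inter_cutEdges.mp (he ▸ Set.mem_singleton e : e ∈ M.edgeSet ∩ cutEdges G Z)
  refine ⟨u, hu, ⟨z, hz, hzu.symm⟩, fun u' hu' z' hz' h => ?_⟩
  have hmem : s(z', u') ∈ M.edgeSet ∩ cutEdges G Z :=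
    mem_edgeSet_inter_cutEdges.mpr ⟨z', u', rfl, h.symm, hz', hu'⟩
  rw [he, Set.mem_singleton_iff, Sym2.eq_iff] at hmem
  rcases hmem with ⟨-, rfl⟩ | ⟨rfl, -⟩
  exacts [rfl, absurd hz' hu]

lemma isPerfectMatching_contractMatching (hM : M.IsPerfectMatching) (hZ : IsTightCut G Z) :
    (contractMatching M Z).IsPerfectMatching := by
  rw [Subgraph.isPerfectMatching_iff]
  rintro (_ | a)
  · obtain ⟨u, hu, ⟨z, hz, huz⟩, huniq⟩ := hZ.existsUnique_crossing hM
    have hne : shoreMap Z z ≠ shoreMap Z u := by simp [shoreMap_of_mem hz, shoreMap_of_notMem hu]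
    refine ⟨shoreMap Z u, shoreMap_of_mem hz ▸ contractMatching_adj huz.symm hne, ?_⟩
    rintro _ ⟨hne', z', u', h, hz', rfl⟩
    have hu' : u' ∉ Z := fun h' => hne' (shoreMap_of_mem h').symm
    rw [huniq u' hu' z' (shoreMap_eq_none_iff.mp hz') h.symm]
  · obtain ⟨w, hw, hwuniq⟩ := Subgraph.isPerfectMatching_iff.mp hM a
    have hne : shoreMap Z a ≠ shoreMap Z w := by
      by_cases hwZ : w ∈ Z
      · simp [shoreMap_of_mem hwZ, shoreMap_of_notMem a.2]
      · simpa [shoreMap_of_notMem hwZ, shoreMap_of_notMem a.2, Subtype.ext_iff] using hw.ne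
    refine ⟨shoreMap Z w, by simpa [shoreMap_of_notMem a.2] using contractMatching_adj hw hne, ?_⟩
    rintro _ ⟨-, u', v', h, hu', rfl⟩
    rw [shoreMap_eq_some_iff.mp hu'] at h
    rw [hwuniq v' h]

theorem matchingPorosity_preimage_shoreMap_le [Finite V] (hZ : IsTightCut G Z)
    (S : Set (Option {v // v ∉ Z})) :
    matchingPorosity G (shoreMap Z ⁻¹' S) ≤ matchingPorosity (contractShore G Z) S := by
  wlog hS : none ∉ S generalizing S
  · have := this Sᶜ (not_not.mpr (not_not.mp hS))
    rwa [Set.preimage_compl, matchingPorosity_compl, matchingPorosity_compl] at this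
  refine matchingPorosity_le_iff.mpr fun M hM => ?_
  refine le_trans ?_
    (matchingPorosity_le_iff.mp le_rfl _ (isPerfectMatching_contractMatching hM hZ))
  refine Set.ncard_le_ncard_of_injOn (Sym2.map (shoreMap Z)) (fun e he => ?_) ?_ (Set.toFinite _)
  · obtain ⟨u, v, rfl, huv, hu, hv⟩ := mem_edgeSet_inter_cutEdges.mp he
    exact mem_edgeSet_inter_cutEdges.mpr
      ⟨_, _, Sym2.map_mk .., contractMatching_adj huv (ne_of_mem_of_not_mem (s := S) hu hv), hu, hv⟩
  -- an edge of `M` in the cut is determined by its endpoint in the shore, which is not contracted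
  · rintro e₁ he₁ e₂ he₂ heq
    obtain ⟨u₁, v₁, rfl, h₁, hu₁, hv₁⟩ := mem_edgeSet_inter_cutEdges.mp he₁
    obtain ⟨u₂, v₂, rfl, h₂, hu₂, hv₂⟩ := mem_edgeSet_inter_cutEdges.mp he₂
    rw [Sym2.map_mk, Sym2.map_mk, Sym2.eq_iff] at heq
    have hu : shoreMap Z u₁ = shoreMap Z u₂ :=
      (heq.resolve_right fun h => hv₂ (show shoreMap Z v₂ ∈ S from h.1 ▸ hu₁)).1
    have hZu : ∀ {u}, shoreMap Z u ∈ S → u ∉ Z := fun hu h => hS (shoreMap_of_mem h ▸ hu)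
    rw [shoreMap_of_notMem (hZu hu₁), shoreMap_of_notMem (hZu hu₂)] at hu
    obtain rfl : u₁ = u₂ := congrArg Subtype.val (Option.some_injective _ hu)
    rw [hM.1.eq_of_adj_left h₁ h₂]

open Classical in
/-- Splits `V` into the vertex sets kept by the contractions of `Z` and of `Zᶜ`. -/
noncomputable def shoreEquiv (Z : Set V) : V ≃ {v // v ∉ Z} ⊕ {v // v ∉ Zᶜ} where
  toFun v := if h : v ∈ Z then .inr ⟨v, not_not.mpr h⟩ else .inl ⟨v, h⟩
  invFun := Sum.elim Subtype.val Subtype.val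
  left_inv v := by by_cases h : v ∈ Z <;> simp [h]
  right_inv := by
    rintro (⟨v, hv⟩ | ⟨v, hv⟩)
    · simp [hv]
    · simp [not_not.mp hv]

lemma getLeft?_comp_shoreEquiv : Sum.getLeft? ∘ shoreEquiv Z = shoreMap Z := by
  ext1 v
  by_cases h : v ∈ Z <;> simp [shoreEquiv, shoreMap, h]

lemma getRight?_comp_shoreEquiv : Sum.getRight? ∘ shoreEquiv Z = shoreMap Zᶜ := by
  ext1 v
  by_cases h : v ∈ Z <;> simp [shoreEquiv, shoreMap, h]

end Contraction

section TightCutDecomposition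

variable {V : Type} [Finite V] {G : SimpleGraph V} {Z : Set V}

lemma card_contractShore (Z : Set V) : Nat.card (Option {v // v ∉ Z}) = Zᶜ.ncard + 1 := by
  rw [Finite.card_option]
  exact congrArg (· + 1) (Nat.card_coe_set_eq Zᶜ)

lemma card_contractShore_lt (hZ : IsNontrivialTightCut G Z) :
    Nat.card (Option {v // v ∉ Z}) < Nat.card V := by
  have := Set.ncard_add_ncard_compl Z
  have := hZ.2.1
  rw [card_contractShore]
  omega

theorem pmw_le_max_pmw_contractShore (hZ : IsNontrivialTightCut G Z) :
    pmw G ≤ max (pmw (contractShore G Z)) (pmw (contractShore G Zᶜ)) := by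
  have hcard := Set.ncard_add_ncard_compl Z
  obtain ⟨hZt, hZ₁, hZ₂⟩ := hZ
  obtain ⟨_, T₁, δ₁, h₁, hw₁⟩ := exists_isPMTree_decompWidthOn_eq_pmw (contractShore G Z)
    (by rw [card_contractShore]; omega)
  obtain ⟨_, T₂, δ₂, h₂, hw₂⟩ := exists_isPMTree_decompWidthOn_eq_pmw (contractShore G Zᶜ)
    (by rw [card_contractShore, compl_compl]; omega)
  rw [← hw₁, ← hw₂]
  refine (((h₁.glue h₂).comp_equiv (shoreEquiv Z)).pmw_le G).trans ?_
  refine decompWidthOn_glue_le h₁ h₂ _ (fun S => ?_) (fun S => ?_)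
  · rw [getLeft?_comp_shoreEquiv]
    exact matchingPorosity_preimage_shoreMap_le hZt S
  · rw [getRight?_comp_shoreEquiv]
    exact matchingPorosity_preimage_shoreMap_le hZt.compl S

end TightCutDecomposition

theorem pmw_le_max_bricks_braces_general {V : Type} [Finite V] (G : SimpleGraph V) (k : ℕ)
    (h : ∀ H : FinGraph, IsBrickOrBraceOf H ⟨G⟩ → pmw H.graph ≤ k) :
    pmw G ≤ k := by
  induction hn : Nat.card V using Nat.strong_induction_on generalizing V with
  | _ n ih =>
    by_cases hcut : ∃ Z, IsNontrivialTightCut G Z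
    · obtain ⟨Z, hZ⟩ := hcut
      refine (pmw_le_max_pmw_contractShore hZ).trans (max_le ?_ ?_)
      · exact ih _ (hn ▸ card_contractShore_lt hZ) _
          (fun H hH => h H (.step H ⟨G⟩ Z hZ hH)) rfl
      · exact ih _ (hn ▸ card_contractShore_lt hZ.compl) _
          (fun H hH => h H (.step H ⟨G⟩ Zᶜ hZ.compl hH)) rfl
    · simp only [not_exists] at hcut
      exact h ⟨G⟩ (.base ⟨G⟩ hcut)

/-- The perfect matching width of a matching covered graph is at most the
maximum of the perfect matching widths of its bricks and braces. -/
theorem pmw_le_max_bricks_braces {V : Type} [Finite V] (G : SimpleGraph V)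
    (hG : MatchingCovered G) (k : ℕ)
    (h : ∀ H : FinGraph, IsBrickOrBraceOf H ⟨G⟩ → pmw H.graph ≤ k) :
    pmw G ≤ k :=
  pmw_le_max_bricks_braces_general G k h
end

section
/- Let G be a matching covered graph, ∂(Z) a non-trivial tight cut in G, M a perfect matching of G, and (T, δ) an M-PM-decomposition of G of width k. Let G_Z be the matching covered graph obtained from G by contracting Z into a single vertex v_Z. Then there is a (M restricted to G_Z)-PM-decomposition of G_Z of width at most k. -/
/-!
Let `u₀z₀` be the edge of `M` crossing the tight cut, with `z₀ ∈ Z`, and let the contraction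
vertex of `G_Z` occupy the leaf `δ z₀`. The leaves of `T` carrying the other vertices of `Z` are
removed one at a time, each together with its neighbour, whose two remaining neighbours are then
joined. Every edge of the resulting cubic tree induces the preimage in `G_Z` of a cut of `T`,
and inner edges come from inner edges. Conformality passes to the contraction because the only
new matching edge, at the contraction vertex, mirrors `u₀z₀`.

For the width, cuts at leaves have porosity at most `1 ≤ k`. For an inner cut, with
`M`-conformal shore `Y`, a perfect matching `N` of `G_Z` lifts to a perfect matching of `G` (use a
perfect matching of `G` through the edge of `N` at the contraction vertex, which exists because
`G` is matching covered), and the two cuts differ by at most the edge at the contraction vertex.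
Both shores are even, so both cuts are even, and the cut of `N` is no larger.
-/

open SimpleGraph

/-- A set `S` is `M`-conformal for a perfect matching `M`: no edge of `M`
crosses between `S` and its complement, i.e. `M` restricted to `S` is a perfect
matching of `G[S]` and `M` restricted to the complement is a perfect matching
of `G - S`. -/
def MConformal {V : Type*} (G : SimpleGraph V) (M : G.Subgraph) (S : Set V) : Prop :=
  ∀ ⦃u v⦄, M.Adj u v → (u ∈ S ↔ v ∈ S)

/-- An `M`-PM-decomposition: a PM-decomposition in which, for every inner edge
of the tree, both shores of the induced cut are `M`-conformal. -/
def IsMPMDecomp {V : Type*} (G : SimpleGraph V) (M : G.Subgraph) {n : ℕ}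
    (T : SimpleGraph (Fin n)) (δ : V → Fin n) : Prop :=
  IsPMDecomp G T δ ∧ ∀ t₁ t₂, T.Adj t₁ t₂ → ndeg T t₁ ≠ 1 → ndeg T t₂ ≠ 1 →
    MConformal G M (treeShore T δ t₁ t₂) ∧ MConformal G M (treeShore T δ t₂ t₁)

/-- The `M`-perfect matching width of `G`: the minimum width of an
`M`-PM-decomposition of `G`. -/
noncomputable def Mpmw {V : Type*} (G : SimpleGraph V) (M : G.Subgraph) : ℕ :=
  sInf {k | ∃ (n : ℕ) (T : SimpleGraph (Fin n)) (δ : V → Fin n),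
    IsMPMDecomp G M T δ ∧ decompWidth G T δ = k}

/-- The relation underlying the restriction of a matching `M` to the tight cut
contraction of the shore `Z`. -/
def matchRel {V : Type*} (G : SimpleGraph V) (M : G.Subgraph) (Z : Set V) :
    Option {v : V // v ∉ Z} → Option {v : V // v ∉ Z} → Prop
  | some u, some w => M.Adj u w
  | some u, none => ∃ z ∈ Z, M.Adj u z
  | _, _ => False

/-- The restriction of a perfect matching `M` of `G` to the tight cut
contraction `G_Z`: the edges of `M` with both endpoints outside `Z`, together
with the edge joining the contraction vertex to the endpoint outside `Z` of the
unique edge of `M` crossing the cut `∂(Z)`. -/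
def restrictMatching {V : Type*} (G : SimpleGraph V) (Z : Set V) (M : G.Subgraph) :
    (contractShore G Z).Subgraph where
  verts := Set.univ
  Adj a b := (contractShore G Z).Adj a b ∧ (matchRel G M Z a b ∨ matchRel G M Z b a)
  adj_sub h := h.1
  edge_vert _ := Set.mem_univ _
  symm := ⟨fun _ _ h => ⟨h.1.symm, h.2.symm⟩⟩

namespace SimpleGraph

section Matching

variable {V : Type*} {G : SimpleGraph V} {M : G.Subgraph} {X : Set V}

lemma cutEdges_compl (X : Set V) : cutEdges G Xᶜ = cutEdges G X := by
  ext e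
  constructor <;> rintro ⟨he, u, v, rfl, hu, hv⟩ <;>
    exact ⟨he, v, u, Sym2.eq_swap, by simpa using hv, by simpa using hu⟩

lemma Subgraph.IsMatching.ncard_inter_cutEdges (hM : M.IsMatching) (X : Set V) :
    (M.edgeSet ∩ cutEdges G X).ncard = {u ∈ X | ∃ w ∉ X, M.Adj u w}.ncard := by
  set P : Set (V × V) := {p | p.1 ∈ X ∧ p.2 ∉ X ∧ M.Adj p.1 p.2}
  have hedges : M.edgeSet ∩ cutEdges G X = (fun p : V × V => s(p.1, p.2)) '' P := by
    ext e
    constructor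
    · rintro ⟨heM, -, u, w, rfl, hu, hw⟩
      exact ⟨(u, w), ⟨hu, hw, heM⟩, rfl⟩
    · rintro ⟨⟨u, w⟩, ⟨hu, hw, huw⟩, rfl⟩
      exact ⟨huw, huw.adj_sub, u, w, rfl, hu, hw⟩
  have hverts : {u ∈ X | ∃ w ∉ X, M.Adj u w} = Prod.fst '' P := by
    ext u
    constructor
    · rintro ⟨hu, w, hw, huw⟩
      exact ⟨(u, w), ⟨hu, hw, huw⟩, rfl⟩
    · rintro ⟨⟨u, w⟩, ⟨hu, hw, huw⟩, rfl⟩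
      exact ⟨hu, w, hw, huw⟩
  rw [hedges, hverts, Set.InjOn.ncard_image, Set.InjOn.ncard_image]
  · rintro ⟨u, w⟩ ⟨-, -, huw⟩ ⟨u', w'⟩ ⟨-, -, huw'⟩ (rfl : u = u')
    exact Prod.ext rfl (hM.eq_of_adj_left huw huw')
  · rintro ⟨u, w⟩ ⟨hu, hw, -⟩ ⟨u', w'⟩ ⟨hu', hw', -⟩ h
    rcases Sym2.eq_iff.1 h with ⟨rfl, rfl⟩ | ⟨rfl, rfl⟩
    · rfl
    · exact absurd hu hw'

theorem Subgraph.IsPerfectMatching.even_ncard_inter_cutEdges_iff [Finite V]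
    (hM : M.IsPerfectMatching) (X : Set V) :
    Even (M.edgeSet ∩ cutEdges G X).ncard ↔ Even X.ncard := by
  classical
  set S := {u ∈ X | ∃ w ∈ X, M.Adj u w}
  set B := {u ∈ X | ∃ w ∉ X, M.Adj u w}
  have hsplit : X = S ∪ B := by
    ext u
    refine ⟨fun hu => ?_, by rintro (⟨hu, -⟩ | ⟨hu, -⟩) <;> exact hu⟩
    obtain ⟨w, huw, -⟩ := hM.1 (hM.2 u)
    by_cases hw : w ∈ X
    exacts [.inl ⟨hu, w, hw, huw⟩, .inr ⟨hu, w, hw, huw⟩]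
  have hdisj : Disjoint S B := Set.disjoint_left.2 fun u ⟨_, w, hw, huw⟩ ⟨_, w', hw', huw'⟩ =>
    hw' (hM.1.eq_of_adj_left huw huw' ▸ hw)
  have hS : (M.induce S).IsMatching := by
    rintro u ⟨hu, w, hw, huw⟩
    refine ⟨w, ⟨⟨hu, w, hw, huw⟩, ⟨hw, u, hu, huw.symm⟩, huw⟩, fun w' ⟨_, _, huw'⟩ => ?_⟩
    exact hM.1.eq_of_adj_left huw' huw
  have hSeven : Even S.ncard := by
    have := Fintype.ofFinite V
    simpa [Set.ncard_eq_toFinset_card'] using hS.even_card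
  have hX : X.ncard = S.ncard + B.ncard := by rw [hsplit, Set.ncard_union_eq hdisj]
  rw [hM.1.ncard_inter_cutEdges, hX, Nat.even_add]
  simp only [hSeven, true_iff]
  rfl

lemma MConformal.inter_cutEdges_eq_empty (h : MConformal G M X) :
    M.edgeSet ∩ cutEdges G X = ∅ := by
  refine Set.eq_empty_of_forall_notMem ?_
  rintro _ ⟨huw, -, u, w, rfl, hu, hw⟩
  exact hw ((h huw).1 hu)

lemma MConformal.even_ncard [Finite V] (hM : M.IsPerfectMatching) (h : MConformal G M X) :
    Even X.ncard := by
  rw [← hM.even_ncard_inter_cutEdges_iff, h.inter_cutEdges_eq_empty, Set.ncard_empty]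
  exact ⟨0, rfl⟩

lemma le_matchingPorosity [Finite V] (hM : M.IsPerfectMatching) (X : Set V) :
    (M.edgeSet ∩ cutEdges G X).ncard ≤ matchingPorosity G X := by
  refine le_csSup ⟨(cutEdges G X).ncard, ?_⟩ ⟨M, hM, rfl⟩
  rintro _ ⟨N, -, rfl⟩
  exact Set.ncard_le_ncard Set.inter_subset_right

lemma matchingPorosity_le {k : ℕ}
    (h : ∀ N : G.Subgraph, N.IsPerfectMatching → (N.edgeSet ∩ cutEdges G X).ncard ≤ k) :
    matchingPorosity G X ≤ k :=
  csSup_le' <| by rintro _ ⟨N, hN, rfl⟩; exact h N hN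

lemma matchingPorosity_compl (X : Set V) : matchingPorosity G Xᶜ = matchingPorosity G X := by
  rw [matchingPorosity, matchingPorosity, cutEdges_compl]

lemma matchingPorosity_singleton_le_one [Finite V] (v : V) : matchingPorosity G {v} ≤ 1 :=
  matchingPorosity_le fun N hN => by
    rw [hN.1.ncard_inter_cutEdges, ← Set.ncard_singleton v]
    exact Set.ncard_le_ncard fun u hu => hu.1

lemma one_le_matchingPorosity_singleton [Finite V] (hM : M.IsPerfectMatching) (v : V) :
    1 ≤ matchingPorosity G {v} := by
  refine le_trans (le_of_eq ?_) (le_matchingPorosity hM {v})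
  rw [hM.1.ncard_inter_cutEdges, eq_comm, Set.ncard_eq_one]
  refine ⟨v, Set.eq_singleton_iff_unique_mem.2 ⟨⟨rfl, ?_⟩, fun u hu => hu.1⟩⟩
  obtain ⟨w, hvw, -⟩ := hM.1 (hM.2 v)
  exact ⟨w, hvw.ne.symm, hvw⟩

end Matching

section Contraction

variable {V : Type*} {G : SimpleGraph V} {Z : Set V} {M : G.Subgraph}

lemma IsTightCut.exists_adj (hZ : IsTightCut G Z) (hM : M.IsPerfectMatching) :
    ∃ u z, u ∉ Z ∧ z ∈ Z ∧ M.Adj u z := by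
  obtain ⟨e, he⟩ := Set.ncard_eq_one.1 (hZ M hM)
  obtain ⟨huz, -, z, u, rfl, hz, hu⟩ := he.symm.subset (Set.mem_singleton e)
  exact ⟨u, z, hu, hz, huz.symm⟩

lemma IsTightCut.eq_of_adj (hZ : IsTightCut G Z) (hM : M.IsPerfectMatching) {u z u' z' : V}
    (hu : u ∉ Z) (hz : z ∈ Z) (h : M.Adj u z) (hu' : u' ∉ Z) (hz' : z' ∈ Z) (h' : M.Adj u' z') :
    u = u' ∧ z = z' := by
  have hcut : ∀ {u z}, u ∉ Z → z ∈ Z → M.Adj u z → s(z, u) ∈ M.edgeSet ∩ cutEdges G Z :=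
    fun hu hz h => ⟨h.symm, h.adj_sub.symm, _, _, rfl, hz, hu⟩
  obtain ⟨e, he⟩ := Set.ncard_eq_one.1 (hZ M hM)
  have heq : s(z, u) = s(z', u') := by
    rw [he] at hcut
    exact (hcut hu hz h).trans (hcut hu' hz' h').symm
  rcases Sym2.eq_iff.1 heq with ⟨rfl, rfl⟩ | ⟨rfl, rfl⟩
  exacts [⟨rfl, rfl⟩, absurd hz hu']

variable (u w : {v : V // v ∉ Z})

@[simp] lemma contractShore_adj_some_some :
    (contractShore G Z).Adj (some u) (some w) ↔ G.Adj u w := by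
  simp only [contractShore, fromRel_adj, ne_eq, Option.some.injEq]
  exact ⟨fun h => h.2.elim id .symm, fun h => ⟨fun huw => h.ne (congrArg _ huw), .inl h⟩⟩

@[simp] lemma contractShore_adj_some_none :
    (contractShore G Z).Adj (some u) none ↔ ∃ z ∈ Z, G.Adj u z := by
  simp [contractShore]

@[simp] lemma contractShore_adj_none_some :
    (contractShore G Z).Adj none (some u) ↔ ∃ z ∈ Z, G.Adj u z := by
  rw [adj_comm, contractShore_adj_some_none]

@[simp] lemma restrictMatching_adj_some_some :
    (restrictMatching G Z M).Adj (some u) (some w) ↔ M.Adj u w := by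
  simp only [restrictMatching, matchRel, contractShore_adj_some_some]
  exact ⟨fun h => h.2.elim id .symm, fun h => ⟨h.adj_sub, .inl h⟩⟩

@[simp] lemma restrictMatching_adj_some_none :
    (restrictMatching G Z M).Adj (some u) none ↔ ∃ z ∈ Z, M.Adj u z := by
  simp only [restrictMatching, matchRel, contractShore_adj_some_none, or_false]
  exact ⟨And.right, fun ⟨z, hz, h⟩ => ⟨⟨z, hz, h.adj_sub⟩, z, hz, h⟩⟩

@[simp] lemma restrictMatching_adj_none_some :
    (restrictMatching G Z M).Adj none (some u) ↔ ∃ z ∈ Z, M.Adj u z := by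
  rw [Subgraph.adj_comm, restrictMatching_adj_some_none]

variable {u w}

lemma restrictMatching_isPerfectMatching (hZ : IsTightCut G Z) (hM : M.IsPerfectMatching) :
    (restrictMatching G Z M).IsPerfectMatching := by
  rw [Subgraph.isPerfectMatching_iff]
  rintro (_ | u)
  · obtain ⟨u₀, z₀, hu₀, hz₀, h₀⟩ := hZ.exists_adj hM
    refine ⟨some ⟨u₀, hu₀⟩, by simpa using ⟨z₀, hz₀, h₀⟩, ?_⟩
    rintro (_ | u) h
    · exact absurd rfl h.ne
    · obtain ⟨z, hz, h⟩ := (restrictMatching_adj_none_some u).1 h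
      exact congrArg some (Subtype.ext (hZ.eq_of_adj hM u.2 hz h hu₀ hz₀ h₀).1)
  · obtain ⟨w, huw, hw⟩ := hM.1 (hM.2 u.1)
    by_cases hwZ : w ∈ Z
    · refine ⟨none, by simpa using ⟨w, hwZ, huw⟩, ?_⟩
      rintro (_ | w') h
      · rfl
      · exact absurd (hw w' ((restrictMatching_adj_some_some u w').1 h) ▸ hwZ) w'.2
    · refine ⟨some ⟨w, hwZ⟩, by simpa using huw, ?_⟩
      rintro (_ | w') h
      · obtain ⟨z, hz, h⟩ := (restrictMatching_adj_some_none u).1 h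
        exact absurd (hw z h ▸ hz) hwZ
      · exact congrArg some (Subtype.ext (hw w' ((restrictMatching_adj_some_some u w').1 h)))

variable (Z) in
def liftVertex (z₀ : V) (o : Option {v : V // v ∉ Z}) : V :=
  o.elim z₀ Subtype.val

@[simp] lemma liftVertex_none (z₀ : V) : liftVertex Z z₀ none = z₀ := rfl

@[simp] lemma liftVertex_some (z₀ : V) : liftVertex Z z₀ (some u) = u := rfl

lemma liftVertex_injective {z₀ : V} (hz₀ : z₀ ∈ Z) : Function.Injective (liftVertex Z z₀) := by
  rintro (_ | u) (_ | w) h <;> simp only [liftVertex_none, liftVertex_some] at h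
  · rfl
  · exact absurd (h ▸ hz₀) w.2
  · exact absurd (h ▸ hz₀) u.2
  · exact congrArg some (Subtype.ext h)

lemma MConformal.preimage_liftVertex (hZ : IsTightCut G Z) (hM : M.IsPerfectMatching)
    {u₀ z₀ : V} (hu₀ : u₀ ∉ Z) (hz₀ : z₀ ∈ Z) (h₀ : M.Adj u₀ z₀) {Y : Set V}
    (hY : MConformal G M Y) :
    MConformal (contractShore G Z) (restrictMatching G Z M) (liftVertex Z z₀ ⁻¹' Y) := by
  have hcross : ∀ u : {v : V // v ∉ Z}, (∃ z ∈ Z, M.Adj u z) → (u.1 ∈ Y ↔ z₀ ∈ Y) := by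
    rintro u ⟨z, hz, h⟩
    rw [(hZ.eq_of_adj hM u.2 hz h hu₀ hz₀ h₀).1]
    exact hY h₀
  rintro (_ | u) (_ | w) h
  · exact absurd rfl h.ne
  · exact (hcross w ((restrictMatching_adj_none_some w).1 h)).symm
  · exact hcross u ((restrictMatching_adj_some_none u).1 h)
  · exact hY ((restrictMatching_adj_some_some u w).1 h)

end Contraction

section Lift

variable {V : Type*} {G : SimpleGraph V} {Z : Set V}

variable (Z) in
def liftMatching (N : (contractShore G Z).Subgraph) (M : G.Subgraph) : G.Subgraph where
  verts := Set.univ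
  Adj a c := (∃ (ha : a ∉ Z) (hc : c ∉ Z), N.Adj (some ⟨a, ha⟩) (some ⟨c, hc⟩)) ∨
    ((a ∈ Z ∨ c ∈ Z) ∧ M.Adj a c)
  adj_sub := by
    rintro a c (⟨ha, hc, h⟩ | ⟨-, h⟩)
    exacts [(contractShore_adj_some_some _ _).1 h.adj_sub, h.adj_sub]
  edge_vert _ := Set.mem_univ _
  symm := ⟨by
    rintro a c (⟨ha, hc, h⟩ | ⟨hac, h⟩)
    exacts [.inl ⟨hc, ha, h.symm⟩, .inr ⟨hac.symm, h.symm⟩]⟩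

lemma liftMatching_isPerfectMatching (hZ : IsTightCut G Z) {N : (contractShore G Z).Subgraph}
    (hN : N.IsPerfectMatching) {M : G.Subgraph} (hM : M.IsPerfectMatching)
    {u : {v : V // v ∉ Z}} {z : V} (hz : z ∈ Z) (hNu : N.Adj (some u) none) (hMu : M.Adj u z) :
    (liftMatching Z N M).IsPerfectMatching := by
  rw [Subgraph.isPerfectMatching_iff]
  intro v
  by_cases hv : v ∈ Z
  · obtain ⟨w, hvw, hw⟩ := hM.1 (hM.2 v)
    refine ⟨w, .inr ⟨.inl hv, hvw⟩, ?_⟩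
    rintro w' (⟨hv', -, -⟩ | ⟨-, h⟩)
    exacts [absurd hv hv', hw w' h]
  by_cases hvu : v = u
  · subst hvu
    refine ⟨z, .inr ⟨.inr hz, hMu⟩, ?_⟩
    rintro w (⟨_, _, h⟩ | ⟨-, h⟩)
    · exact absurd (hN.1.eq_of_adj_left hNu h) (Option.some_ne_none _).symm
    · exact hM.1.eq_of_adj_left h hMu
  obtain ⟨_ | w, hvw, hw⟩ := hN.1 (hN.2 (some ⟨v, hv⟩))
  · exact absurd (congrArg Subtype.val (Option.some_injective _ (hN.1.eq_of_adj_right hvw hNu)))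
      hvu
  refine ⟨w, .inl ⟨hv, w.2, hvw⟩, ?_⟩
  rintro w' (⟨_, _, h⟩ | ⟨hvw', h⟩)
  · exact congrArg Subtype.val (Option.some_injective _ (hw _ h))
  · exact absurd (hZ.eq_of_adj hM hv (hvw'.resolve_left hv) h u.2 hz hMu).1 hvu

lemma exists_isPerfectMatching_lift (hG : MatchingCovered G) (hZ : IsTightCut G Z)
    {N : (contractShore G Z).Subgraph} (hN : N.IsPerfectMatching) :
    ∃ N' : G.Subgraph, N'.IsPerfectMatching ∧ ∀ a c, N.Adj (some a) (some c) → N'.Adj a c := by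
  obtain ⟨_ | u, hNu, -⟩ := hN.1 (hN.2 none)
  · exact absurd rfl hNu.ne
  obtain ⟨z, hz, huz⟩ := (contractShore_adj_none_some u).1 hNu.adj_sub
  obtain ⟨M, hM, huzM⟩ := hG.2 s(u, z) huz
  exact ⟨liftMatching Z N M, liftMatching_isPerfectMatching hZ hN hM hz hNu.symm huzM,
    fun a c h => .inl ⟨a.2, c.2, h⟩⟩

lemma ncard_inter_cutEdges_contractShore_le [Finite V] {z₀ : V} (hz₀ : z₀ ∈ Z)
    {N : (contractShore G Z).Subgraph} (hN : N.IsPerfectMatching) {N' : G.Subgraph}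
    (hNN' : ∀ a c, N.Adj (some a) (some c) → N'.Adj a c) (Y : Set V) :
    (N.edgeSet ∩ cutEdges (contractShore G Z) (liftVertex Z z₀ ⁻¹' Y)).ncard ≤
      (N'.edgeSet ∩ cutEdges G Y).ncard + 1 := by
  obtain ⟨w, -, hw⟩ := hN.1 (hN.2 none)
  set E := N.edgeSet ∩ cutEdges (contractShore G Z) (liftVertex Z z₀ ⁻¹' Y)
  have hmaps : Sym2.map (liftVertex Z z₀) '' (E \ {s(none, w)}) ⊆ N'.edgeSet ∩ cutEdges G Y := by
    rintro _ ⟨_, ⟨⟨hac, -, a, c, rfl, ha, hc⟩, hne⟩, rfl⟩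
    rw [Subgraph.mem_edgeSet] at hac
    rcases a with _ | a <;> rcases c with _ | c
    · exact absurd rfl hac.ne
    · exact absurd (by rw [hw _ hac]; rfl) hne
    · exact absurd (by rw [hw _ hac.symm, Sym2.eq_swap]; rfl) hne
    · have h := hNN' a c hac
      exact ⟨h, h.adj_sub, a, c, rfl, ha, hc⟩
  calc E.ncard ≤ (E \ {s(none, w)}).ncard + 1 := by
        have := Set.pred_ncard_le_ncard_sdiff_singleton E s(none, w)
        omega
    _ = (Sym2.map (liftVertex Z z₀) '' (E \ {s(none, w)})).ncard + 1 := by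
        rw [Set.ncard_image_of_injective _ (Sym2.map.injective (liftVertex_injective hz₀))]
    _ ≤ (N'.edgeSet ∩ cutEdges G Y).ncard + 1 := Nat.add_le_add_right (Set.ncard_le_ncard hmaps) 1

theorem matchingPorosity_contractShore_le [Finite V] (hG : MatchingCovered G)
    (hZ : IsTightCut G Z) {M : G.Subgraph} (hM : M.IsPerfectMatching) {u₀ z₀ : V} (hu₀ : u₀ ∉ Z)
    (hz₀ : z₀ ∈ Z) (h₀ : M.Adj u₀ z₀) {Y : Set V} (hY : MConformal G M Y) :
    matchingPorosity (contractShore G Z) (liftVertex Z z₀ ⁻¹' Y) ≤ matchingPorosity G Y := by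
  refine matchingPorosity_le fun N hN => ?_
  obtain ⟨N', hN', hNN'⟩ := exists_isPerfectMatching_lift hG hZ hN
  -- Both shores are even, so both cuts are even and the edge at the contraction vertex is
  -- absorbed by parity.
  obtain ⟨i, hi⟩ :
      Even (N.edgeSet ∩ cutEdges (contractShore G Z) (liftVertex Z z₀ ⁻¹' Y)).ncard :=
    (hN.even_ncard_inter_cutEdges_iff _).2 <| (hY.preimage_liftVertex hZ hM hu₀ hz₀ h₀).even_ncard
      (restrictMatching_isPerfectMatching hZ hM)
  obtain ⟨j, hj⟩ : Even (N'.edgeSet ∩ cutEdges G Y).ncard :=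
    (hN'.even_ncard_inter_cutEdges_iff _).2 (hY.even_ncard hM)
  have hle := ncard_inter_cutEdges_contractShore_le hz₀ hN hNN' Y
  have hmax := le_matchingPorosity hN' Y
  omega

end Lift

section Trees

variable {U W W' : Type*} {T : SimpleGraph W}

lemma Reachable.map_of_forall_adj {A : SimpleGraph W} {B : SimpleGraph W'} (f : W → W')
    (hf : ∀ ⦃p q⦄, A.Adj p q → B.Reachable (f p) (f q)) {a c : W} (h : A.Reachable a c) :
    B.Reachable (f a) (f c) := by
  rw [reachable_iff_reflTransGen] at h ⊢
  exact Relation.ReflTransGen.lift' f (fun p q hpq => (reachable_iff_reflTransGen _ _).1 (hf hpq))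
    _ _ h

lemma Reachable.eq_of_forall_not_adj {A : SimpleGraph W} {a t : W} (h : A.Reachable a t)
    (ht : ∀ c, ¬ A.Adj t c) : a = t := by
  obtain ⟨p⟩ := h.symm
  cases p with
  | nil => rfl
  | cons hadj _ => exact absurd hadj (ht _)

lemma IsAcyclic.not_adj_of_adj_of_adj (hT : T.IsAcyclic) {a b c : W} (hab : T.Adj a b)
    (hbc : T.Adj b c) : ¬ T.Adj a c := by
  intro hac
  refine isAcyclic_iff_forall_adj_isBridge.1 hT hac
    ((Adj.reachable (v := b) ?_).trans (Adj.reachable ?_))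
  · simp [hab, hbc.ne, hac.ne]
  · simp [hbc, hab.ne.symm, hbc.ne]

lemma eq_of_adj_of_ndeg_eq_one {ℓ b c : W} (hℓ : ndeg T ℓ = 1) (hb : T.Adj ℓ b)
    (hc : T.Adj ℓ c) : c = b := by
  obtain ⟨a, ha⟩ := Set.ncard_eq_one.1 hℓ
  have hb' : b ∈ T.neighborSet ℓ := hb
  have hc' : c ∈ T.neighborSet ℓ := hc
  rw [ha] at hb' hc'
  exact hc'.trans hb'.symm

lemma exists_adj_of_ndeg_eq_one {t : W} (h : ndeg T t = 1) : ∃ b, T.Adj t b := by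
  obtain ⟨b, hb⟩ := Set.ncard_eq_one.1 h
  exact ⟨b, hb.symm.subset rfl⟩

lemma treeShore_eq_singleton {δ : U → W} (hδ : δ.Injective) {t₁ t₂ : W} (h : T.Adj t₁ t₂)
    (h₁ : ndeg T t₁ = 1) {v : U} (hv : δ v = t₁) : treeShore T δ t₁ t₂ = {v} := by
  have hiso : ∀ c, ¬ (T.deleteEdges {s(t₁, t₂)}).Adj t₁ c := fun c hc => by
    rw [deleteEdges_adj, eq_of_adj_of_ndeg_eq_one h₁ h hc.1] at hc
    exact hc.2 rfl
  ext v'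
  refine ⟨fun h' => hδ ((Reachable.eq_of_forall_not_adj h' hiso).trans hv.symm), ?_⟩
  rintro rfl
  show (T.deleteEdges _).Reachable (δ v') t₁
  rw [hv]

lemma treeShore_eq_compl_singleton (hT : T.Connected) {δ : U → W} (hδ : δ.Injective)
    {t₁ t₂ : W} (h : T.Adj t₁ t₂) (h₂ : ndeg T t₂ = 1) {v : U} (hv : δ v = t₂) :
    treeShore T δ t₁ t₂ = {v}ᶜ := by
  classical
  have hleaf : ∀ c, T.Adj t₂ c → c = t₁ := fun c => eq_of_adj_of_ndeg_eq_one h₂ h.symm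
  ext v'
  simp only [treeShore, Set.mem_ofPred_eq, Set.mem_compl_iff, Set.mem_singleton_iff]
  constructor
  · rintro h' rfl
    rw [hv] at h'
    refine h.ne (Reachable.eq_of_forall_not_adj h'.symm fun c hc => ?_)
    rw [deleteEdges_adj, hleaf c hc.1, Sym2.eq_swap] at hc
    exact hc.2 rfl
  · intro hne
    -- Send the leaf `t₂` to its neighbour `t₁`; every edge other than `t₁t₂` survives.
    have key := (hT.preconnected (δ v') t₁).map_of_forall_adj
      (B := T.deleteEdges {s(t₁, t₂)}) (fun w => if w = t₂ then t₁ else w) fun p q hpq => by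
        by_cases hp : p = t₂
        · subst hp
          simp [hleaf q hpq, h.ne]
        by_cases hq : q = t₂
        · subst hq
          simp [hleaf p hpq.symm, h.ne]
        simp only [hp, hq, if_false]
        exact Adj.reachable (by simp [hpq, hp, hq])
    have hv' : δ v' ≠ t₂ := hv ▸ hδ.ne hne
    simpa [hv', h.ne] using key

end Trees

section Decomposition

variable {V : Type*} {G : SimpleGraph V} {n : ℕ} {T : SimpleGraph (Fin n)} {δ : V → Fin n}

lemma le_decompWidth {t₁ t₂ : Fin n} (h : T.Adj t₁ t₂) :
    matchingPorosity G (treeShore T δ t₁ t₂) ≤ decompWidth G T δ := by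
  refine le_csSup ((Set.finite_range fun p : Fin n × Fin n =>
    matchingPorosity G (treeShore T δ p.1 p.2)).subset ?_).bddAbove ⟨t₁, t₂, h, rfl⟩
  rintro _ ⟨s₁, s₂, -, rfl⟩
  exact ⟨(s₁, s₂), rfl⟩

lemma decompWidth_le {k : ℕ}
    (h : ∀ t₁ t₂, T.Adj t₁ t₂ → matchingPorosity G (treeShore T δ t₁ t₂) ≤ k) :
    decompWidth G T δ ≤ k :=
  csSup_le' <| by rintro _ ⟨t₁, t₂, ht, rfl⟩; exact h t₁ t₂ ht

lemma one_le_decompWidth [Finite V] (hδ : δ.Injective) (hleaf : ∀ v, ndeg T (δ v) = 1)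
    {M : G.Subgraph} (hM : M.IsPerfectMatching) (v : V) : 1 ≤ decompWidth G T δ := by
  obtain ⟨t, ht⟩ := exists_adj_of_ndeg_eq_one (hleaf v)
  calc 1 ≤ matchingPorosity G {v} := one_le_matchingPorosity_singleton hM v
    _ = matchingPorosity G (treeShore T δ (δ v) t) := by
      rw [treeShore_eq_singleton hδ ht (hleaf v) rfl]
    _ ≤ decompWidth G T δ := le_decompWidth ht

lemma IsPMDecomp.matchingPorosity_treeShore_le_one [Finite V] (hT : IsPMDecomp G T δ)
    {t₁ t₂ : Fin n} (h : T.Adj t₁ t₂) (hleaf : ndeg T t₁ = 1 ∨ ndeg T t₂ = 1) :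
    matchingPorosity G (treeShore T δ t₁ t₂) ≤ 1 := by
  obtain ⟨⟨hTree, -⟩, hδ, -, hsurj⟩ := hT
  rcases hleaf with h₁ | h₂
  · obtain ⟨v, hv⟩ := hsurj t₁ h₁
    rw [treeShore_eq_singleton hδ h h₁ hv]
    exact matchingPorosity_singleton_le_one v
  · obtain ⟨v, hv⟩ := hsurj t₂ h₂
    rw [treeShore_eq_compl_singleton hTree.1 hδ h h₂ hv, matchingPorosity_compl]
    exact matchingPorosity_singleton_le_one v

end Decomposition

section InheritsCuts

variable {U W W₁ W₂ : Type*}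

def InheritsCuts (T₂ : SimpleGraph W₂) (δ₂ : U → W₂) (T : SimpleGraph W) (δ : U → W) : Prop :=
  ∀ t₁ t₂, T₂.Adj t₁ t₂ → ∃ s₁ s₂, T.Adj s₁ s₂ ∧
    treeShore T₂ δ₂ t₁ t₂ = treeShore T δ s₁ s₂ ∧ treeShore T₂ δ₂ t₂ t₁ = treeShore T δ s₂ s₁ ∧
    (ndeg T₂ t₁ ≠ 1 → ndeg T₂ t₂ ≠ 1 → ndeg T s₁ ≠ 1 ∧ ndeg T s₂ ≠ 1)

lemma InheritsCuts.trans {T₂ : SimpleGraph W₂} {δ₂ : U → W₂} {T₁ : SimpleGraph W₁}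
    {δ₁ : U → W₁} {T : SimpleGraph W} {δ : U → W} (h₂ : InheritsCuts T₂ δ₂ T₁ δ₁)
    (h₁ : InheritsCuts T₁ δ₁ T δ) : InheritsCuts T₂ δ₂ T δ := by
  intro t₁ t₂ ht
  obtain ⟨r₁, r₂, hr, e₁, e₂, hin⟩ := h₂ t₁ t₂ ht
  obtain ⟨s₁, s₂, hs, f₁, f₂, hin'⟩ := h₁ r₁ r₂ hr
  exact ⟨s₁, s₂, hs, e₁.trans f₁, e₂.trans f₂, fun n₁ n₂ => hin' (hin n₁ n₂).1 (hin n₁ n₂).2⟩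

variable {T : SimpleGraph W} (e : W₁ ≃ W)

lemma ndeg_comap_equiv (t : W₁) : ndeg (T.comap e) t = ndeg T (e t) :=
  Set.ncard_preimage_of_injective_subset_range e.injective fun x _ => e.surjective x

lemma IsCubicTree.comap_equiv (hT : IsCubicTree T) : IsCubicTree (T.comap e) :=
  ⟨(Iso.comap e T).isTree_iff.2 hT.1, fun t => by rw [ndeg_comap_equiv]; exact hT.2 (e t)⟩

lemma inheritsCuts_comap_equiv (δ : U → W) : InheritsCuts (T.comap e) (e.symm ∘ δ) T δ := by
  have hshore : ∀ t₁ t₂,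
      treeShore (T.comap e) (e.symm ∘ δ) t₁ t₂ = treeShore T δ (e t₁) (e t₂) := by
    intro t₁ t₂
    have hdel : (T.comap e).deleteEdges {s(t₁, t₂)} =
        (T.deleteEdges {s(e t₁, e t₂)}).comap e := by
      ext x y
      simp
    ext v
    simp only [treeShore, Set.mem_ofPred_eq, hdel, Function.comp_apply]
    rw [← (Iso.comap e _).reachable_iff]
    simp
  intro t₁ t₂ ht
  exact ⟨e t₁, e t₂, ht, hshore t₁ t₂, hshore t₂ t₁,
    by simp only [ndeg_comap_equiv]; exact And.intro⟩

end InheritsCuts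

section PruneLeaf

variable {U W : Type*} {T : SimpleGraph W} {ℓ b : W}

/-- Delete the leaf `ℓ` and its neighbour `b`, and join the other neighbours of `b`. -/
def pruneLeaf (T : SimpleGraph W) (ℓ b : W) : SimpleGraph {t : W // t ≠ ℓ ∧ t ≠ b} where
  Adj x y := T.Adj x y ∨ (x ≠ y ∧ T.Adj x b ∧ T.Adj b y)
  symm := ⟨fun _ _ => Or.imp .symm fun ⟨hne, h₁, h₂⟩ => ⟨hne.symm, h₂.symm, h₁.symm⟩⟩
  loopless := ⟨fun _ h => h.elim (fun h => h.ne rfl) fun h => h.1 rfl⟩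

lemma pruneLeaf_adj {x y : {t : W // t ≠ ℓ ∧ t ≠ b}} :
    (pruneLeaf T ℓ b).Adj x y ↔ T.Adj x y ∨ (x ≠ y ∧ T.Adj x b ∧ T.Adj b y) := Iff.rfl

/-- A walk of `A` through `b` (or `ℓ`) is rerouted by collapsing `ℓ` and `b` onto a neighbour
`c₀` of `b`. -/
lemma pruneLeaf_reachable_iff {A : SimpleGraph W} (hℓ : ∀ c, A.Adj ℓ c → c = b)
    {c₀ : {t : W // t ≠ ℓ ∧ t ≠ b}} (hc₀ : A.Adj b c₀) {x y : {t : W // t ≠ ℓ ∧ t ≠ b}} :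
    (pruneLeaf A ℓ b).Reachable x y ↔ A.Reachable x y := by
  classical
  refine ⟨fun h => h.map_of_forall_adj Subtype.val ?_, fun h => ?_⟩
  · rintro p q (h | ⟨-, h₁, h₂⟩)
    exacts [h.reachable, h₁.reachable.trans h₂.reachable]
  set f : W → {t : W // t ≠ ℓ ∧ t ≠ b} := fun w => if hw : w ≠ ℓ ∧ w ≠ b then ⟨w, hw⟩ else c₀
  have hf : ∀ w (hw : w ≠ ℓ ∧ w ≠ b), f w = ⟨w, hw⟩ := fun w hw => dif_pos hw
  have hfc₀ : ∀ w, ¬(w ≠ ℓ ∧ w ≠ b) → f w = c₀ := fun w hw => dif_neg hw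
  have hb : ∀ t : {t : W // t ≠ ℓ ∧ t ≠ b}, A.Adj t b → (pruneLeaf A ℓ b).Reachable t c₀ := by
    intro t ht
    by_cases htc : t = c₀
    · rw [htc]
    · exact (pruneLeaf_adj.2 (Or.inr ⟨htc, ht, hc₀⟩)).reachable
  have hpb : ∀ {p q : W}, A.Adj p q → p ≠ b → ¬(q ≠ ℓ ∧ q ≠ b) → q = b := fun {p q} hpq hp hq => by
    by_contra hqb
    obtain rfl : q = ℓ := by tauto
    exact hp (hℓ _ hpq.symm)
  have key := h.map_of_forall_adj f fun p q hpq => by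
    by_cases hp : p ≠ ℓ ∧ p ≠ b <;> by_cases hq : q ≠ ℓ ∧ q ≠ b
    · rw [hf p hp, hf q hq]
      exact (pruneLeaf_adj.2 (Or.inl hpq)).reachable
    · obtain rfl := hpb hpq hp.2 hq
      rw [hf p hp, hfc₀ _ hq]
      exact hb ⟨p, hp⟩ hpq
    · obtain rfl := hpb hpq.symm hq.2 hp
      rw [hfc₀ _ hp, hf q hq]
      exact (hb ⟨q, hq⟩ hpq.symm).symm
    · rw [hfc₀ p hp, hfc₀ q hq]
  rwa [hf x x.2, hf y y.2] at key

lemma pruneLeaf_deleteEdges_of_adj (hT : T.IsAcyclic) {t₁ t₂ : {t : W // t ≠ ℓ ∧ t ≠ b}}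
    (h : T.Adj t₁ t₂) :
    (pruneLeaf T ℓ b).deleteEdges {s(t₁, t₂)} =
      pruneLeaf (T.deleteEdges {s(t₁.1, t₂.1)}) ℓ b := by
  have hsym : ∀ x y : {t : W // t ≠ ℓ ∧ t ≠ b},
      s(x, y) = s(t₁, t₂) ↔ s(x.1, y.1) = s(t₁.1, t₂.1) := by
    simp [Subtype.ext_iff]
  have hb : ∀ w, s(w, b) ≠ s(t₁.1, t₂.1) := by
    simp [Ne.symm t₁.2.2, Ne.symm t₂.2.2]
  ext x y
  simp only [deleteEdges_adj, pruneLeaf_adj, Set.mem_singleton_iff]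
  constructor
  · rintro ⟨hxy | ⟨hne, hxb, hby⟩, he⟩
    · exact .inl ⟨hxy, (hsym x y).not.1 he⟩
    · exact .inr ⟨hne, ⟨hxb, hb x⟩, hby, by rw [Sym2.eq_swap]; exact hb y⟩
  · rintro (⟨hxy, he⟩ | ⟨hne, ⟨hxb, -⟩, hby, -⟩)
    · exact ⟨.inl hxy, (hsym x y).not.2 he⟩
    · refine ⟨.inr ⟨hne, hxb, hby⟩, fun he => hT.not_adj_of_adj_of_adj hxb hby ?_⟩
      rcases Sym2.eq_iff.1 he with ⟨rfl, rfl⟩ | ⟨rfl, rfl⟩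
      exacts [h, h.symm]

lemma pruneLeaf_deleteEdges_of_not_adj (hT : T.IsAcyclic) {x y : {t : W // t ≠ ℓ ∧ t ≠ b}}
    (hx : T.Adj x b) (hy : T.Adj b y)
    (hb : ∀ c : {t : W // t ≠ ℓ ∧ t ≠ b}, T.Adj b c → c = x ∨ c = y) :
    (pruneLeaf T ℓ b).deleteEdges {s(x, y)} = pruneLeaf (T.deleteEdges {s(x.1, b)}) ℓ b := by
  ext p q
  simp only [deleteEdges_adj, pruneLeaf_adj, Set.mem_singleton_iff]
  constructor
  · rintro ⟨hpq | ⟨hne, hpb, hbq⟩, he⟩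
    · exact .inl ⟨hpq, by simp [p.2.2, q.2.2]⟩
    · rcases hb p hpb.symm with rfl | rfl <;> rcases hb q hbq with rfl | rfl
      exacts [absurd rfl hne, absurd rfl he, absurd Sym2.eq_swap he, absurd rfl hne]
  · rintro (⟨hpq, -⟩ | ⟨hne, ⟨hpb, hpx⟩, hbq, hqx⟩)
    · refine ⟨.inl hpq, fun he => hT.not_adj_of_adj_of_adj hx hy ?_⟩
      rcases Sym2.eq_iff.1 he with ⟨rfl, rfl⟩ | ⟨rfl, rfl⟩
      exacts [hpq, hpq.symm]
    · rcases hb p hpb.symm with rfl | rfl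
      · exact absurd rfl hpx
      rcases hb q hbq with rfl | rfl
      exacts [absurd Sym2.eq_swap hqx, absurd rfl hne]

variable [Finite W]

lemma ndeg_pruneLeaf (hT : T.IsAcyclic) (hℓ : ∀ c, T.Adj ℓ c → c = b) (hℓb : T.Adj ℓ b)
    (hb : ndeg T b = 3) (t : {t : W // t ≠ ℓ ∧ t ≠ b}) :
    ndeg (pruneLeaf T ℓ b) t = ndeg T t := by
  set R := {c | T.Adj t b ∧ T.Adj b c ∧ c ≠ ℓ ∧ c ≠ t}
  have himage : Subtype.val '' (pruneLeaf T ℓ b).neighborSet t = (T.neighborSet t \ {b}) ∪ R := by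
    ext c
    constructor
    · rintro ⟨c, hc | ⟨hne, htb, hbc⟩, rfl⟩
      · exact .inl ⟨hc, c.2.2⟩
      · exact .inr ⟨htb, hbc, c.2.1, fun h => hne (Subtype.ext h).symm⟩
    · rintro (⟨hc, hcb⟩ | ⟨htb, hbc, hcℓ, hct⟩)
      · have hcℓ : c ≠ ℓ := by
          rintro rfl
          exact t.2.2 (hℓ t hc.symm)
        exact ⟨⟨c, hcℓ, hcb⟩, .inl hc, rfl⟩
      · exact ⟨⟨c, hcℓ, hbc.ne.symm⟩, .inr ⟨fun h => hct (congrArg Subtype.val h).symm, htb, hbc⟩,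
          rfl⟩
  have hdisj : Disjoint (T.neighborSet t \ {b}) R :=
    Set.disjoint_left.2 fun c ⟨hc, _⟩ ⟨htb, hbc, _⟩ => hT.not_adj_of_adj_of_adj htb hbc hc
  rw [ndeg, ndeg, ← Set.ncard_image_of_injective _ Subtype.val_injective, himage,
    Set.ncard_union_eq hdisj]
  by_cases htb : T.Adj t b
  · have hR : R = T.neighborSet b \ {ℓ, t.1} := by
      ext c
      simp [R, htb]
    have hsub : ({ℓ, t.1} : Set W) ⊆ T.neighborSet b := by
      rintro _ (rfl | rfl)
      exacts [hℓb.symm, htb.symm]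
    rw [hR, Set.ncard_sdiff hsub, Set.ncard_pair (Ne.symm t.2.1), ← ndeg, hb]
    exact Set.ncard_sdiff_singleton_add_one htb
  · have hR : R = ∅ := by simp [R, htb]
    rw [Set.sdiff_singleton_eq_self (show b ∉ T.neighborSet t from htb), hR, Set.ncard_empty,
      add_zero]

end PruneLeaf

section PruneCubicTree

variable {U W : Type*} {T : SimpleGraph W} {ℓ b : W}

lemma IsCubicTree.ndeg_eq_three_of_leaf_adj (hT : IsCubicTree T) (hℓ : ndeg T ℓ = 1)
    (hℓb : T.Adj ℓ b) {w : W} (hwℓ : w ≠ ℓ) (hwb : w ≠ b) : ndeg T b = 3 := by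
  refine (hT.2 b).resolve_left fun hb => ?_
  have hclosed : ∀ p ∈ ({ℓ, b} : Set W), ∀ q, T.Adj p q → q ∈ ({ℓ, b} : Set W) := by
    rintro p (rfl | rfl) q hpq
    exacts [.inr (eq_of_adj_of_ndeg_eq_one hℓ hℓb hpq),
      .inl (eq_of_adj_of_ndeg_eq_one hb hℓb.symm hpq)]
  have hw := (hT.1.connected.preconnected ℓ w).mem_subgraphVerts
    (H := (⊤ : T.Subgraph).induce {ℓ, b}) (fun p hp q hpq => ⟨hp, hclosed p hp q hpq, hpq⟩)
    (.inl rfl)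
  rcases hw with h | h
  exacts [hwℓ h, hwb h]

lemma exists_adj_of_ndeg_eq_three [Finite W] (hb : ndeg T b = 3) (hℓb : T.Adj ℓ b) :
    ∃ c : {t : W // t ≠ ℓ ∧ t ≠ b}, T.Adj b c := by
  have h2 : (T.neighborSet b \ {ℓ}).ncard = 2 := by
    rw [Set.ncard_sdiff_singleton_of_mem (show ℓ ∈ T.neighborSet b from hℓb.symm), ← ndeg, hb]
  obtain ⟨x, _, _, hN⟩ := Set.ncard_eq_two.1 h2
  have hx : x ∈ T.neighborSet b \ {ℓ} := hN ▸ .inl rfl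
  exact ⟨⟨x, hx.2, hx.1.ne.symm⟩, hx.1⟩

lemma eq_or_eq_of_ndeg_eq_three [Finite W] (hb : ndeg T b = 3) (hℓb : T.Adj ℓ b)
    {x y : {t : W // t ≠ ℓ ∧ t ≠ b}} (hxy : x ≠ y) (hx : T.Adj b x) (hy : T.Adj b y)
    (c : {t : W // t ≠ ℓ ∧ t ≠ b}) (hc : T.Adj b c) : c = x ∨ c = y := by
  have hN : ({ℓ, x.1, y.1} : Set W) = T.neighborSet b := by
    refine Set.eq_of_subset_of_ncard_le ?_ ?_
    · rintro _ (rfl | rfl | rfl)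
      exacts [hℓb.symm, hx, hy]
    · rw [← ndeg, hb, Set.ncard_eq_three.2 ⟨ℓ, x, y, Ne.symm x.2.1, Ne.symm y.2.1,
        fun h => hxy (Subtype.ext h), rfl⟩]
  have hc' : c.1 ∈ ({ℓ, x.1, y.1} : Set W) := hN ▸ hc
  rcases hc' with h | h | h
  exacts [absurd h c.2.1, .inl (Subtype.ext h), .inr (Subtype.ext h)]

lemma reachable_pruneLeaf_deleteEdges_of_adj [Finite W] (hT : T.IsAcyclic) (hℓ : ndeg T ℓ = 1)
    (hℓb : T.Adj ℓ b) (hb : ndeg T b = 3) {t₁ t₂ x y : {t : W // t ≠ ℓ ∧ t ≠ b}}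
    (h : T.Adj t₁ t₂) :
    ((pruneLeaf T ℓ b).deleteEdges {s(t₁, t₂)}).Reachable x y ↔
      (T.deleteEdges {s(t₁.1, t₂.1)}).Reachable x y := by
  obtain ⟨c₀, hc₀⟩ := exists_adj_of_ndeg_eq_three hb hℓb
  rw [pruneLeaf_deleteEdges_of_adj hT h]
  refine pruneLeaf_reachable_iff (A := T.deleteEdges _)
    (fun c hc => eq_of_adj_of_ndeg_eq_one hℓ hℓb (deleteEdges_adj.1 hc).1) (c₀ := c₀) ?_
  simp [hc₀, Ne.symm t₁.2.2, Ne.symm t₂.2.2]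

lemma reachable_pruneLeaf_deleteEdges_of_not_adj [Finite W] (hT : T.IsAcyclic) (hℓ : ndeg T ℓ = 1)
    (hℓb : T.Adj ℓ b) (hb : ndeg T b = 3) {t₁ t₂ x y : {t : W // t ≠ ℓ ∧ t ≠ b}}
    (hne : t₁ ≠ t₂) (h₁ : T.Adj t₁ b) (h₂ : T.Adj b t₂) :
    ((pruneLeaf T ℓ b).deleteEdges {s(t₁, t₂)}).Reachable x y ↔
      (T.deleteEdges {s(t₁.1, b)}).Reachable x y := by
  rw [pruneLeaf_deleteEdges_of_not_adj hT h₁ h₂ (eq_or_eq_of_ndeg_eq_three hb hℓb hne h₁.symm h₂)]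
  refine pruneLeaf_reachable_iff (A := T.deleteEdges _)
    (fun c hc => eq_of_adj_of_ndeg_eq_one hℓ hℓb (deleteEdges_adj.1 hc).1) (c₀ := t₂) ?_
  simp [h₂, t₂.2.2, (Subtype.coe_injective.ne hne).symm]

lemma IsCubicTree.pruneLeaf [Finite W] (hT : IsCubicTree T) (hℓ : ndeg T ℓ = 1) (hℓb : T.Adj ℓ b)
    (hb : ndeg T b = 3) : IsCubicTree (pruneLeaf T ℓ b) := by
  have hleaf : ∀ c, T.Adj ℓ c → c = b := fun c => eq_of_adj_of_ndeg_eq_one hℓ hℓb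
  obtain ⟨c₀, hc₀⟩ := exists_adj_of_ndeg_eq_three hb hℓb
  have hconn : (SimpleGraph.pruneLeaf T ℓ b).Connected := (connected_iff _).2
    ⟨fun x y => (pruneLeaf_reachable_iff hleaf hc₀).2 (hT.1.connected.preconnected x y), ⟨c₀⟩⟩
  have hbridge := isAcyclic_iff_forall_adj_isBridge.1 hT.1.isAcyclic
  have hacyc : (SimpleGraph.pruneLeaf T ℓ b).IsAcyclic := by
    refine isAcyclic_iff_forall_adj_isBridge.2 ?_
    rintro x y (hxy | ⟨hne, hxb, hby⟩) <;> rw [isBridge_iff]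
    · rw [reachable_pruneLeaf_deleteEdges_of_adj hT.1.isAcyclic hℓ hℓb hb hxy]
      exact hbridge hxy
    · rw [reachable_pruneLeaf_deleteEdges_of_not_adj hT.1.isAcyclic hℓ hℓb hb hne hxb hby]
      refine fun h => hbridge hxb (h.trans (Adj.reachable ?_))
      simp [hby.symm, y.2.2, (Subtype.coe_injective.ne hne).symm]
  exact ⟨(isTree_iff _).2 ⟨hconn, hacyc⟩,
    fun t => ndeg_pruneLeaf hT.1.isAcyclic hleaf hℓb hb t ▸ hT.2 t⟩

lemma inheritsCuts_pruneLeaf [Finite W] (hT : IsCubicTree T) (hℓ : ndeg T ℓ = 1) (hℓb : T.Adj ℓ b)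
    (hb : ndeg T b = 3) (δ₁ : U → {t : W // t ≠ ℓ ∧ t ≠ b}) :
    InheritsCuts (pruneLeaf T ℓ b) δ₁ T (Subtype.val ∘ δ₁) := by
  have hdeg := ndeg_pruneLeaf hT.1.isAcyclic (fun c => eq_of_adj_of_ndeg_eq_one hℓ hℓb) hℓb hb
  rintro t₁ t₂ (h | ⟨hne, h₁, h₂⟩)
  · refine ⟨t₁, t₂, h, ?_, ?_, fun n₁ n₂ => ⟨hdeg t₁ ▸ n₁, hdeg t₂ ▸ n₂⟩⟩ <;> ext v
    exacts [reachable_pruneLeaf_deleteEdges_of_adj hT.1.isAcyclic hℓ hℓb hb h,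
      reachable_pruneLeaf_deleteEdges_of_adj hT.1.isAcyclic hℓ hℓb hb h.symm]
  -- The new edge `t₁t₂` stands for the path `t₁ b t₂`, and induces the cut of the edge `t₁b`.
  have hreach := fun {x y} => reachable_pruneLeaf_deleteEdges_of_not_adj (x := x) (y := y)
    hT.1.isAcyclic hℓ hℓb hb hne h₁ h₂
  refine ⟨t₁, b, h₁, ?_, ?_, fun n₁ _ => ⟨hdeg t₁ ▸ n₁, by omega⟩⟩ <;> ext v
  · exact hreach
  have h₂b : (T.deleteEdges {s(t₁.1, b)}).Adj t₂ b := by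
    simp [h₂.symm, t₂.2.2, (Subtype.coe_injective.ne hne).symm]
  simp only [treeShore, Set.mem_ofPred_eq, Function.comp_apply]
  rw [show s(t₂, t₁) = s(t₁, t₂) from Sym2.eq_swap, hreach,
    show s(b, t₁.1) = s(t₁.1, b) from Sym2.eq_swap]
  exact ⟨fun h => h.trans h₂b.reachable, fun h => h.trans h₂b.symm.reachable⟩

end PruneCubicTree

theorem exists_isPMDecomp_inheritsCuts {U : Type*} (H : SimpleGraph U) {u₁ u₂ : U}
    (hu : u₁ ≠ u₂) : ∀ (n : ℕ) (W : Type) [Finite W] (T : SimpleGraph W) (δ : U → W),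
      Nat.card W = n → IsCubicTree T → δ.Injective → (∀ u, ndeg T (δ u) = 1) →
      ∃ (m : ℕ) (T' : SimpleGraph (Fin m)) (δ' : U → Fin m),
        IsPMDecomp H T' δ' ∧ InheritsCuts T' δ' T δ := by
  intro n
  refine Nat.strong_induction_on n fun n ih => ?_
  intro W _ T δ hn hT hδ hleaf
  by_cases hsurj : ∀ t, ndeg T t = 1 → ∃ u, δ u = t
  · set e := (Finite.equivFin W).symm
    refine ⟨_, T.comap e, e.symm ∘ δ, ⟨hT.comap_equiv e, e.symm.injective.comp hδ, fun u => ?_,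
      fun t ht => ?_⟩, inheritsCuts_comap_equiv e δ⟩
    · simpa [ndeg_comap_equiv] using hleaf u
    · rw [ndeg_comap_equiv] at ht
      obtain ⟨u, hu⟩ := hsurj _ ht
      exact ⟨u, by simp [hu]⟩
  push Not at hsurj
  obtain ⟨ℓ, hℓ, hℓδ⟩ := hsurj
  obtain ⟨b, hℓb⟩ := exists_adj_of_ndeg_eq_one hℓ
  have hb : ndeg T b = 3 := by
    by_cases h₁ : δ u₁ = b
    · exact hT.ndeg_eq_three_of_leaf_adj hℓ hℓb (hℓδ u₂) fun h₂ => hu (hδ (h₁.trans h₂.symm))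
    · exact hT.ndeg_eq_three_of_leaf_adj hℓ hℓb (hℓδ u₁) h₁
  have hδb : ∀ u, δ u ≠ b := fun u h => by simpa [h, hb] using hleaf u
  set δ₁ : U → {t : W // t ≠ ℓ ∧ t ≠ b} := fun u => ⟨δ u, hℓδ u, hδb u⟩
  have hcard : Nat.card {t : W // t ≠ ℓ ∧ t ≠ b} < n := hn ▸ Finite.card_subtype_lt fun h => h.1 rfl
  obtain ⟨m, T', δ', hT', hinh⟩ := ih _ hcard _ (pruneLeaf T ℓ b) δ₁ rfl (hT.pruneLeaf hℓ hℓb hb)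
    (fun u v h => hδ (congrArg Subtype.val h)) fun u =>
      (ndeg_pruneLeaf hT.1.isAcyclic (fun c => eq_of_adj_of_ndeg_eq_one hℓ hℓb) hℓb hb _).trans
        (hleaf u)
  exact ⟨m, T', δ', hT', hinh.trans (inheritsCuts_pruneLeaf hT hℓ hℓb hb δ₁)⟩

end SimpleGraph

/-- If `(T, δ)` is an `M`-PM-decomposition of `G` of width `k` and `∂(Z)` is a
non-trivial tight cut, then the tight cut contraction `G_Z` has an
`M|_{G_Z}`-PM-decomposition of width at most `k`. -/
theorem contraction_MPMdecomp_width_le {V : Type*} [Finite V] (G : SimpleGraph V)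
    (hG : MatchingCovered G) (Z : Set V) (hZ : IsNontrivialTightCut G Z)
    (M : G.Subgraph) (hM : M.IsPerfectMatching)
    {n : ℕ} (T : SimpleGraph (Fin n)) (δ : V → Fin n)
    (hT : IsMPMDecomp G M T δ) (k : ℕ) (hw : decompWidth G T δ = k) :
    ∃ (m : ℕ) (T' : SimpleGraph (Fin m)) (δ' : Option {v : V // v ∉ Z} → Fin m),
      IsMPMDecomp (contractShore G Z) (restrictMatching G Z M) T' δ' ∧
      decompWidth (contractShore G Z) T' δ' ≤ k := by
  obtain ⟨u₀, z₀, hu₀, hz₀, h₀⟩ := hZ.1.exists_adj hM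
  obtain ⟨⟨hTcub, hδ, hleaf, -⟩, hconf⟩ := hT
  obtain ⟨m, T', δ', hT', hinh⟩ := exists_isPMDecomp_inheritsCuts (contractShore G Z)
    (Option.some_ne_none ⟨u₀, hu₀⟩) n (Fin n) T (δ ∘ liftVertex Z z₀) (Nat.card_fin n) hTcub
    (hδ.comp (liftVertex_injective hz₀)) fun _ => hleaf _
  refine ⟨m, T', δ', ⟨hT', fun t₁ t₂ ht h₁ h₂ => ?_⟩, decompWidth_le fun t₁ t₂ ht => ?_⟩
  · obtain ⟨s₁, s₂, hs, e₁, e₂, hinner⟩ := hinh t₁ t₂ ht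
    obtain ⟨c₁, c₂⟩ := hconf s₁ s₂ hs (hinner h₁ h₂).1 (hinner h₁ h₂).2
    rw [e₁, e₂]
    exact ⟨c₁.preimage_liftVertex hZ.1 hM hu₀ hz₀ h₀, c₂.preimage_liftVertex hZ.1 hM hu₀ hz₀ h₀⟩
  by_cases hleaf' : ndeg T' t₁ = 1 ∨ ndeg T' t₂ = 1
  · exact (hT'.matchingPorosity_treeShore_le_one ht hleaf').trans
      (hw ▸ one_le_decompWidth hδ hleaf hM z₀)
  push Not at hleaf'
  obtain ⟨s₁, s₂, hs, e₁, -, hinner⟩ := hinh t₁ t₂ ht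
  obtain ⟨c₁, -⟩ := hconf s₁ s₂ hs (hinner hleaf'.1 hleaf'.2).1 (hinner hleaf'.1 hleaf'.2).2
  rw [e₁]
  exact (matchingPorosity_contractShore_le hG hZ.1 hM hu₀ hz₀ h₀ c₁).trans (hw ▸ le_decompWidth hs)
end

section
/- Let T be a cubic tree with an even number of leaves. Then the spine of T is cubic (every vertex of the spine has degree 1 or 3 in the spine) if and only if T has no odd edges. -/
open SimpleGraph

/-!
Deleting an edge `ab` of a tree splits the leaves into those on the side of `a` and those on the
side of `b`; deleting a spine vertex `t` splits them according to the neighbour of `t` whose side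
they lie in, and a leaf neighbour contributes exactly itself. So, modulo 2, the number of leaves
on the side of a spine vertex `a` away from a spine neighbour `b` is the number of leaf neighbours
of `a` plus the number of spine neighbours `x ≠ b` whose side carries an odd number of leaves.

If the spine is cubic, every spine vertex has 0 or 2 leaf neighbours, and induction on the size
of the side shows that no spine edge has an odd number of leaves on a side. Conversely, with no
odd edges and an even number of leaves, the side of every spine neighbour of `t` carries an even
number of leaves, hence `t` has an even number of leaf neighbours, i.e. spine degree 1 or 3.
-/

namespace SimpleGraph

variable {W : Type*} {G : SimpleGraph W} {a b t v x y : W}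

def edgeSide (G : SimpleGraph W) (a b : W) : Set W :=
  {v | (G.deleteEdges {s(a, b)}).Reachable v a}

lemma mem_edgeSide_self (G : SimpleGraph W) (a b : W) : a ∈ G.edgeSide a b :=
  Reachable.refl _

lemma Walk.reachable_deleteEdges_of_notMem_support {u : W} (p : G.Walk u v)
    (ht : t ∉ p.support) (x : W) : (G.deleteEdges {s(t, x)}).Reachable u v :=
  reachable_deleteEdges_iff_exists_walk.mpr ⟨p, fun h => ht (p.fst_mem_support_of_mem_edges h)⟩

lemma Walk.reachable_deleteEdges_or (p : G.Walk v a) (b : W) :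
    (G.deleteEdges {s(a, b)}).Reachable v a ∨ (G.deleteEdges {s(a, b)}).Reachable v b := by
  induction p with
  | nil => exact Or.inl (Reachable.refl _)
  | @cons u x w hux _ ih =>
    by_cases he : s(u, x) = s(w, b)
    · rcases Sym2.eq_iff.mp he with ⟨rfl, -⟩ | ⟨rfl, -⟩
      · exact Or.inl (Reachable.refl _)
      · exact Or.inr (Reachable.refl _)
    · have hux' : (G.deleteEdges {s(w, b)}).Adj u x := by simpa [hux] using he
      exact ih.imp hux'.reachable.trans hux'.reachable.trans

lemma notMem_edgeSide (hG : G.IsAcyclic) (h : G.Adj a b) : b ∉ G.edgeSide a b :=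
  fun hb => isAcyclic_iff_forall_adj_isBridge.mp hG h hb.symm

lemma edgeSide_union_edgeSide (hG : G.Connected) (a b : W) :
    G.edgeSide a b ∪ G.edgeSide b a = Set.univ := by
  refine Set.eq_univ_of_forall fun v => ?_
  obtain ⟨p⟩ := hG.preconnected v a
  simpa [edgeSide, Sym2.eq_swap] using p.reachable_deleteEdges_or b

lemma disjoint_edgeSide (hG : G.IsAcyclic) (h : G.Adj a b) :
    Disjoint (G.edgeSide a b) (G.edgeSide b a) := by
  refine Set.disjoint_left.mpr fun v hva hvb => notMem_edgeSide hG h ?_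
  rw [edgeSide, Sym2.eq_swap] at hvb
  exact hvb.symm.trans hva

/-- A path into `y` avoiding the edge `ty` cannot pass through `t`, so it avoids `tx` too. -/
lemma edgeSide_subset_edgeSide (hG : G.IsAcyclic) (hy : G.Adj t y)
    (hxy : x ≠ y) : G.edgeSide y t ⊆ G.edgeSide t x := by
  classical
  rintro v ⟨p⟩
  have ht : t ∉ p.support := fun ht =>
    notMem_edgeSide hG hy.symm ⟨p.dropUntil t ht⟩
  have hyt : (G.deleteEdges {s(t, x)}).Adj y t := by
    simpa [hy.symm, Sym2.eq_iff, hxy.symm] using fun h : y = t => absurd h.symm hy.ne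
  rw [← p.support_mapLe_eq_support (deleteEdges_le _)] at ht
  exact (Walk.reachable_deleteEdges_of_notMem_support _ ht x).trans hyt.reachable

lemma edgeSide_ssubset_edgeSide (hG : G.IsAcyclic) (hy : G.Adj t y)
    (hxy : x ≠ y) : G.edgeSide y t ⊂ G.edgeSide t x :=
  (Set.ssubset_iff_of_subset (edgeSide_subset_edgeSide hG hy hxy)).mpr
    ⟨t, G.mem_edgeSide_self t x, notMem_edgeSide hG hy.symm⟩

lemma exists_adj_mem_edgeSide (hG : G.Connected) (hv : v ≠ t) :
    ∃ x, G.Adj t x ∧ v ∈ G.edgeSide x t := by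
  obtain ⟨p, hp⟩ := hG.exists_isPath t v
  cases p with
  | nil => exact absurd rfl hv
  | @cons _ x _ htx q =>
    obtain ⟨-, ht⟩ := Walk.cons_isPath_iff _ _ |>.mp hp
    refine ⟨x, htx, ?_⟩
    rw [edgeSide, Sym2.eq_swap]
    exact q.reverse.reachable_deleteEdges_of_notMem_support (by simpa using ht) x

lemma pairwiseDisjoint_edgeSide (hG : G.IsAcyclic) (t : W) :
    (G.neighborSet t).PairwiseDisjoint (G.edgeSide · t) := fun _ hx _ hy hxy =>
  (disjoint_edgeSide hG hx.symm).mono_right (edgeSide_subset_edgeSide hG hy hxy)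

lemma ncard_eq_ncard_inter_edgeSide_add [Finite W] (hG : G.IsTree) (h : G.Adj a b) (s : Set W) :
    s.ncard = (s ∩ G.edgeSide a b).ncard + (s ∩ G.edgeSide b a).ncard := by
  rw [← Set.ncard_union_eq
      ((disjoint_edgeSide hG.2 h).mono Set.inter_subset_right Set.inter_subset_right),
    ← Set.inter_union_distrib_left, edgeSide_union_edgeSide hG.1, Set.inter_univ]

lemma ncard_eq_sum_ncard_inter_edgeSide [Fintype W] [DecidableRel G.Adj] (hG : G.IsTree)
    {s : Set W} (ht : t ∉ s) :
    s.ncard = ∑ x ∈ G.neighborFinset t, (s ∩ G.edgeSide x t).ncard := by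
  have hs : s = ⋃ x ∈ (G.neighborFinset t : Set W), s ∩ G.edgeSide x t := by
    ext v
    simp only [Set.mem_iUnion, Set.mem_inter_iff, Finset.mem_coe, mem_neighborFinset,
      exists_prop]
    refine ⟨fun hv => ?_, fun ⟨_, _, hv, _⟩ => hv⟩
    obtain ⟨x, hx, hvx⟩ := exists_adj_mem_edgeSide hG.1 (ne_of_mem_of_not_mem hv ht)
    exact ⟨x, hx, hv, hvx⟩
  conv_lhs => rw [hs]
  rw [Set.Finite.ncard_biUnion (Set.toFinite _) (fun _ _ => Set.toFinite _)
    (by rw [coe_neighborFinset]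
        exact (pairwiseDisjoint_edgeSide hG.2 t).mono fun _ => Set.inter_subset_right),
    finsum_mem_coe_finset]

end SimpleGraph

section CubicTree

open scoped Finset

variable {W : Type*} {T : SimpleGraph W} {a b t ℓ : W}

lemma ndeg_ne_one_of_adj_of_adj {v : W} (ha : T.Adj v a) (hb : T.Adj v b) (hab : a ≠ b) :
    ndeg T v ≠ 1 := fun h => by
  obtain ⟨x, hx⟩ := Set.ncard_eq_one.mp h
  have ha' : a ∈ T.neighborSet v := ha
  have hb' : b ∈ T.neighborSet v := hb
  rw [hx] at ha' hb'
  exact hab (ha'.trans hb'.symm)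

lemma sideLeaves_eq_inter_edgeSide (T : SimpleGraph W) (a b : W) :
    sideLeaves T a b = {v | ndeg T v = 1} ∩ T.edgeSide a b := rfl

lemma edgeSide_eq_singleton_of_leaf (hℓ : ndeg T ℓ = 1) (h : T.Adj ℓ t) :
    T.edgeSide ℓ t = {ℓ} := by
  refine Set.eq_singleton_iff_unique_mem.mpr ⟨T.mem_edgeSide_self ℓ t, fun v ⟨p⟩ => ?_⟩
  cases hp : p.reverse with
  | nil => rfl
  | cons hℓx _ =>
    have ⟨hℓx, hne⟩ := deleteEdges_adj.mp hℓx
    exact absurd hℓ (ndeg_ne_one_of_adj_of_adj h hℓx fun hx => hne (by simp [hx]))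

lemma sideLeaves_eq_singleton_of_leaf (hℓ : ndeg T ℓ = 1) (h : T.Adj ℓ t) :
    sideLeaves T ℓ t = {ℓ} := by
  rw [sideLeaves_eq_inter_edgeSide, edgeSide_eq_singleton_of_leaf hℓ h]
  exact Set.inter_eq_right.mpr (Set.singleton_subset_iff.mpr hℓ)

lemma ncard_leaves_eq_add [Finite W] (hT : T.IsTree) (h : T.Adj a b) :
    {v | ndeg T v = 1}.ncard = (sideLeaves T a b).ncard + (sideLeaves T b a).ncard :=
  ncard_eq_ncard_inter_edgeSide_add hT h _

lemma ncard_leaves_eq_sum [Fintype W] [DecidableRel T.Adj] (hT : T.IsTree) (ht : ndeg T t ≠ 1) :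
    {v | ndeg T v = 1}.ncard = ∑ x ∈ T.neighborFinset t, (sideLeaves T x t).ncard :=
  ncard_eq_sum_ncard_inter_edgeSide hT ht

lemma spineDeg_add_card_leaf_neighbors [Fintype W] [DecidableRel T.Adj] (t : W) :
    spineDeg T t + #{x ∈ T.neighborFinset t | ndeg T x = 1} = ndeg T t := by
  have hspine : spineDeg T t = #{x ∈ T.neighborFinset t | ndeg T x ≠ 1} := by
    rw [spineDeg, ← Set.ncard_coe_finset]
    congr 1
    ext
    simp
  rw [hspine, add_comm, Finset.card_filter_add_card_filter_not, ndeg,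
    Set.ncard_eq_toFinset_card', ← neighborFinset_def]

lemma even_ncard_sideLeaves [Fintype W] [DecidableEq W] [DecidableRel T.Adj] (hT : IsCubicTree T)
    (hsp : ∀ t, ndeg T t ≠ 1 → spineDeg T t = 1 ∨ spineDeg T t = 3)
    (hab : T.Adj a b) (ha : ndeg T a ≠ 1) (hb : ndeg T b ≠ 1) :
    Even (sideLeaves T a b).ncard := by
  induction hn : (T.edgeSide a b).ncard using Nat.strong_induction_on generalizing a b with
  | _ n ih =>
  have hodd : ∀ x ∈ (T.neighborFinset a).erase b,
      Odd (sideLeaves T x a).ncard ↔ ndeg T x = 1 := by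
    intro x hx
    obtain ⟨hxb, hax⟩ := Finset.mem_erase.mp hx
    rw [mem_neighborFinset] at hax
    by_cases hx1 : ndeg T x = 1
    · simp [hx1, sideLeaves_eq_singleton_of_leaf hx1 hax.symm]
    · have hlt : (T.edgeSide x a).ncard < n :=
        hn ▸ Set.ncard_lt_ncard (edgeSide_ssubset_edgeSide hT.1.2 hax hxb.symm)
      simpa [hx1] using ih _ hlt hax.symm hx1 ha rfl
  have hsum : (sideLeaves T a b).ncard =
      ∑ x ∈ (T.neighborFinset a).erase b, (sideLeaves T x a).ncard := by
    have h₁ := ncard_leaves_eq_sum hT.1 ha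
    have h₂ := ncard_leaves_eq_add hT.1 hab
    rw [← Finset.add_sum_erase _ _ ((mem_neighborFinset _ _ _).mpr hab)] at h₁
    omega
  have hleaves : #{x ∈ (T.neighborFinset a).erase b | ndeg T x = 1} =
      #{x ∈ T.neighborFinset a | ndeg T x = 1} := by
    rw [Finset.filter_erase, Finset.erase_eq_of_notMem (by simp [hb])]
  have hdeg := spineDeg_add_card_leaf_neighbors (T := T) a
  rw [hsum, Finset.even_sum_iff_even_card_odd, Finset.filter_congr hodd, hleaves, Nat.even_iff]
  rcases hsp a ha with h | h <;> rcases hT.2 a with h' | h' <;> omega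

lemma spineDeg_eq_one_or_three_of_forall_not_isOddEdge [Fintype W] [DecidableRel T.Adj]
    (hT : IsCubicTree T) (heven : Even {v | ndeg T v = 1}.ncard)
    (hno : ∀ t₁ t₂, ¬ IsOddEdge T t₁ t₂) (ht : ndeg T t ≠ 1) :
    spineDeg T t = 1 ∨ spineDeg T t = 3 := by
  have hodd : ∀ x ∈ T.neighborFinset t, Odd (sideLeaves T x t).ncard ↔ ndeg T x = 1 := by
    intro x hx
    rw [mem_neighborFinset] at hx
    refine ⟨fun hxt => ?_, fun hx1 => by simp [sideLeaves_eq_singleton_of_leaf hx1 hx.symm]⟩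
    by_contra hx1
    have htx : Odd (sideLeaves T t x).ncard := by
      rw [ncard_leaves_eq_add hT.1 hx, Nat.even_add] at heven
      rwa [← Nat.not_even_iff_odd, heven, Nat.not_even_iff_odd]
    exact hno t x ⟨hx, ht, hx1, htx, hxt⟩
  rw [ncard_leaves_eq_sum hT.1 ht, Finset.even_sum_iff_even_card_odd, Finset.filter_congr hodd,
    Nat.even_iff] at heven
  have hdeg := spineDeg_add_card_leaf_neighbors (T := T) t
  rcases hT.2 t with h | h <;> omega

end CubicTree

/-- For a cubic tree with an even number of leaves, the spine is cubic if and
only if the tree has no odd edges. -/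
theorem spine_cubic_iff_no_odd_edges {W : Type*} [Finite W] (T : SimpleGraph W)
    (hT : IsCubicTree T) (heven : Even {v | ndeg T v = 1}.ncard) :
    (∀ t, ndeg T t ≠ 1 → spineDeg T t = 1 ∨ spineDeg T t = 3) ↔
      ∀ t₁ t₂, ¬ IsOddEdge T t₁ t₂ := by
  classical
  have := Fintype.ofFinite W
  refine ⟨fun hsp t₁ t₂ ⟨hadj, h₁, h₂, hodd, _⟩ => ?_,
    fun hno t ht => spineDeg_eq_one_or_three_of_forall_not_isOddEdge hT heven hno ht⟩
  exact Nat.not_even_iff_odd.mpr hodd (even_ncard_sideLeaves hT hsp hadj h₁ h₂)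
end

section
/- Let G be a brick or brace of perfect matching width 2 and let (T, δ) be a PM-decomposition of G of width 2. Then the spine of T is cubic (every vertex of the spine has degree 1 or 3 in the spine). -/
open SimpleGraph

/-- A brick or a brace: a matching covered graph without non-trivial tight
cuts (braces are the bipartite ones, bricks the non-bipartite ones). -/
def IsBrickOrBrace {V : Type*} (G : SimpleGraph V) : Prop :=
  MatchingCovered G ∧ ∀ X : Set V, ¬ IsNontrivialTightCut G X

/-!
Let `t` be a non-leaf of the cubic tree. The edges at `t` split the leaves of `T`, and hence
`V(G)`, into the shores behind the neighbours `z` of `t`. Behind a leaf `z` the shore is a single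
vertex. Behind a spine vertex `z` both the shore and its complement have at least two vertices;
if the shore were odd, every perfect matching would cross it an odd number of times, and at most
twice since the width is two, so exactly once: a non-trivial tight cut, which a brick or brace
does not have. So these shores are even, and as `|V(G)|` is even, `t` has an even number of leaf
neighbours, i.e. none or two.
-/

open scoped Finset

def treeSide {W : Type*} (T : SimpleGraph W) (a t : W) : Set W :=
  {x | (T.deleteEdges {s(a, t)}).Reachable x a}

namespace SimpleGraph

section Tree

variable {W : Type*} {T : SimpleGraph W} {a t x : W}

lemma mem_treeSide_self : a ∈ treeSide T a t := Reachable.refl a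

lemma IsAcyclic.notMem_treeSide (hT : T.IsAcyclic) (h : T.Adj a t) : t ∉ treeSide T a t :=
  fun ht => isAcyclic_iff_forall_adj_isBridge.mp hT h ht.symm

lemma Walk.reachable_deleteEdges_of_notMem_support_s16 {H : SimpleGraph W} (hle : H ≤ T)
    {u v : W} (p : H.Walk u v) {e : Sym2 W} (ha : a ∈ e) (hp : a ∉ p.support) :
    (T.deleteEdges {e}).Reachable u v :=
  ⟨(p.mapLe hle).toDeleteEdge e fun he =>
    hp (by simpa using Walk.mem_support_of_mem_edges he ha)⟩

lemma IsAcyclic.treeSide_subset (hT : T.IsAcyclic) (hx : T.Adj a x) (hxt : x ≠ t) :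
    treeSide T x a ⊆ treeSide T a t := by
  classical
  rintro y ⟨p⟩
  have ha : a ∉ p.support := fun ha =>
    hT.notMem_treeSide hx.symm ⟨p.dropUntil a ha⟩
  have hxa : (T.deleteEdges {s(a, t)}).Adj x a := by
    simp [hx.symm, hxt, hx.ne']
  exact (p.reachable_deleteEdges_of_notMem_support_s16 (deleteEdges_le _) (Sym2.mem_mk_left a t)
    ha).trans hxa.reachable

lemma IsAcyclic.disjoint_treeSide (hT : T.IsAcyclic) {z z' : W} (hz : T.Adj t z)
    (hz' : T.Adj t z') (hne : z ≠ z') : Disjoint (treeSide T z t) (treeSide T z' t) := by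
  classical
  refine Set.disjoint_left.mpr fun x ⟨p⟩ hx' => hT.notMem_treeSide hz'.symm (Reachable.symm ?_)
  have ht : t ∉ p.support := fun ht =>
    hT.notMem_treeSide hz.symm ⟨p.dropUntil t ht⟩
  have hzt : (T.deleteEdges {s(z', t)}).Adj z t := by
    simp [hz.symm, hne, hz.ne']
  exact ((p.reachable_deleteEdges_of_notMem_support_s16 (deleteEdges_le _)
    (Sym2.mem_mk_right z' t) ht).symm.trans hx').symm.trans hzt.reachable

lemma IsAcyclic.disjoint_treeSide_swap (hT : T.IsAcyclic) (h : T.Adj a t) :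
    Disjoint (treeSide T a t) (treeSide T t a) := by
  refine Set.disjoint_left.mpr fun x hxa hxt => hT.notMem_treeSide h ?_
  rw [treeSide, Sym2.eq_swap] at hxt
  exact hxt.symm.trans hxa

lemma Connected.exists_adj_mem_treeSide (hT : T.Connected) (hx : x ≠ t) :
    ∃ z, T.Adj t z ∧ x ∈ treeSide T z t := by
  classical
  obtain ⟨p, hp⟩ : ∃ p : T.Walk t x, p.IsPath := ⟨_, (hT.preconnected t x).some.bypass_isPath⟩
  cases p with
  | nil => exact absurd rfl hx
  | cons h q =>
    have ht : t ∉ q.support := ((Walk.cons_isPath_iff h q).mp hp).2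
    exact ⟨_, h, (q.reachable_deleteEdges_of_notMem_support_s16 le_rfl (Sym2.mem_mk_right _ t) ht).symm⟩

lemma IsTree.biUnion_treeSide (hT : T.IsTree) (t : W) :
    ⋃ z ∈ T.neighborSet t, treeSide T z t = {t}ᶜ := by
  ext x
  simp only [Set.mem_iUnion, mem_neighborSet, exists_prop, Set.mem_compl_singleton_iff]
  constructor
  · rintro ⟨z, hz, hx⟩ rfl
    exact hT.isAcyclic.notMem_treeSide hz.symm hx
  · exact hT.connected.exists_adj_mem_treeSide

lemma treeSide_eq_singleton (h : T.Adj a t) (ha : ndeg T a = 1) : treeSide T a t = {a} := by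
  refine Set.eq_singleton_iff_unique_mem.mpr ⟨mem_treeSide_self, fun x hx => ?_⟩
  obtain ⟨p⟩ := hx.symm
  by_contra hxa
  have hsnd := p.adj_snd (p.not_nil_of_ne (Ne.symm hxa))
  obtain ⟨w, hw⟩ := Set.ncard_eq_one.mp ha
  have hsnd_t : p.snd = t := by
    have hsw : p.snd ∈ T.neighborSet a := (deleteEdges_adj.mp hsnd).1
    have htw : t ∈ T.neighborSet a := h
    rw [hw] at hsw htw
    exact hsw.trans htw.symm
  exact (deleteEdges_adj.mp hsnd).2 (by rw [hsnd_t]; rfl)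

lemma IsAcyclic.exists_leaf_mem_treeSide [Finite W] (hT : T.IsAcyclic) (h : T.Adj a t) :
    ∃ ℓ ∈ treeSide T a t, ndeg T ℓ = 1 := by
  induction hn : (treeSide T a t).ncard using Nat.strong_induction_on generalizing a t with
  | _ n ih =>
  by_cases ha : ndeg T a = 1
  · exact ⟨a, mem_treeSide_self, ha⟩
  have h1 : 1 < ndeg T a :=
    lt_of_le_of_ne ((Set.ncard_pos (Set.toFinite _)).mpr ⟨t, h⟩) (Ne.symm ha)
  obtain ⟨x, hx, hxt⟩ := Set.exists_ne_of_one_lt_ncard h1 t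
  have hsub := hT.treeSide_subset hx hxt
  have hlt : treeSide T x a ⊂ treeSide T a t :=
    (Set.ssubset_iff_of_subset hsub).mpr ⟨a, mem_treeSide_self, hT.notMem_treeSide hx.symm⟩
  obtain ⟨ℓ, hℓ, hleaf⟩ := ih _ (hn ▸ Set.ncard_lt_ncard hlt) hx.symm rfl
  exact ⟨ℓ, hsub hℓ, hleaf⟩

lemma IsAcyclic.one_lt_ncard_leaves [Finite W] (hT : T.IsAcyclic) (h : T.Adj a t) :
    1 < {ℓ | ndeg T ℓ = 1}.ncard := by
  obtain ⟨ℓ, hℓ, hℓleaf⟩ := hT.exists_leaf_mem_treeSide h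
  obtain ⟨ℓ', hℓ', hℓ'leaf⟩ := hT.exists_leaf_mem_treeSide h.symm
  exact (Set.one_lt_ncard (Set.toFinite _)).mpr
    ⟨ℓ, hℓleaf, ℓ', hℓ'leaf, (hT.disjoint_treeSide_swap h).ne_of_mem hℓ hℓ'⟩

lemma IsAcyclic.two_le_ncard_sideLeaves [Finite W] (hT : T.IsAcyclic) (h : T.Adj a t)
    (ha : 3 ≤ ndeg T a) : 2 ≤ (sideLeaves T a t).ncard := by
  have h2 : 1 < (T.neighborSet a \ {t}).ncard := by
    rw [Set.ncard_sdiff_singleton_of_mem (s := T.neighborSet a) h]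
    exact Nat.lt_sub_of_add_lt ha
  obtain ⟨x, ⟨hx, hxt⟩, y, ⟨hy, hyt⟩, hxy⟩ := (Set.one_lt_ncard (Set.toFinite _)).mp h2
  obtain ⟨ℓ, hℓ, hℓleaf⟩ := hT.exists_leaf_mem_treeSide hx.symm
  obtain ⟨ℓ', hℓ', hℓ'leaf⟩ := hT.exists_leaf_mem_treeSide hy.symm
  exact (Set.one_lt_ncard (Set.toFinite _)).mpr
    ⟨ℓ, ⟨hℓleaf, hT.treeSide_subset hx hxt hℓ⟩, ℓ', ⟨hℓ'leaf, hT.treeSide_subset hy hyt hℓ'⟩,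
      (hT.disjoint_treeSide hx hy hxy).ne_of_mem hℓ hℓ'⟩

lemma sideLeaves_eq_inter : sideLeaves T a t = {ℓ | ndeg T ℓ = 1} ∩ treeSide T a t := rfl

lemma IsTree.ncard_leaves_eq_sum_ncard_sideLeaves [Finite W] [Fintype (T.neighborSet t)]
    (hT : T.IsTree) (ht : ndeg T t ≠ 1) :
    {ℓ | ndeg T ℓ = 1}.ncard = ∑ z ∈ T.neighborFinset t, (sideLeaves T z t).ncard := by
  have hleaves : {ℓ | ndeg T ℓ = 1} = ⋃ z ∈ (T.neighborFinset t : Set W), sideLeaves T z t := by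
    simp_rw [sideLeaves_eq_inter, ← Set.inter_iUnion₂, coe_neighborFinset, hT.biUnion_treeSide]
    exact (Set.inter_eq_left.mpr fun ℓ hℓ (hℓt : ℓ = t) => ht (hℓt ▸ hℓ)).symm
  rw [hleaves, Set.Finite.ncard_biUnion (Finset.finite_toSet _) (fun _ _ => Set.toFinite _),
    finsum_mem_coe_finset]
  exact fun z hz z' hz' hne => (hT.isAcyclic.disjoint_treeSide ((mem_neighborFinset ..).mp hz)
    ((mem_neighborFinset ..).mp hz') hne).mono
    Set.inter_subset_right Set.inter_subset_right

lemma spineDeg_add_card_filter_leaf [Fintype (T.neighborSet t)] :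
    spineDeg T t + #{z ∈ T.neighborFinset t | ndeg T z = 1} = ndeg T t := by
  have : spineDeg T t = #{z ∈ T.neighborFinset t | ndeg T z ≠ 1} := by
    rw [spineDeg, ← Set.ncard_coe_finset, Finset.coe_filter]
    simp
  rw [this, add_comm, Finset.card_filter_add_card_filter_not, ndeg, ← Set.ncard_coe_finset,
    coe_neighborFinset]

end Tree

section Matching

variable {V : Type*} {G : SimpleGraph V}

lemma Subgraph.IsMatching.even_ncard_verts [Finite V] {M : G.Subgraph} (h : M.IsMatching) :
    Even M.verts.ncard := by
  classical
  have := Fintype.ofFinite V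
  simpa [Set.ncard_eq_toFinset_card'] using h.even_card

lemma Subgraph.IsPerfectMatching.odd_ncard_inter_cutEdges_iff [Finite V] {M : G.Subgraph}
    (hM : M.IsPerfectMatching) (X : Set V) :
    Odd (M.edgeSet ∩ cutEdges G X).ncard ↔ Odd X.ncard := by
  choose σ hσ huniq using fun v => hM.1 (hM.2 v)
  have hσσ : ∀ v, σ (σ v) = v := fun v => (huniq _ _ (hσ v).symm).symm
  set S := {x ∈ X | σ x ∉ X}
  have hcut : M.edgeSet ∩ cutEdges G X = (fun x => s(x, σ x)) '' S := by
    ext e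
    constructor
    · rintro ⟨he, -, u, w, rfl, hu, hw⟩
      obtain rfl := huniq u w he
      exact ⟨u, ⟨hu, hw⟩, rfl⟩
    · rintro ⟨x, ⟨hx, hσx⟩, rfl⟩
      exact ⟨hσ x, M.adj_sub (hσ x), x, σ x, rfl, hx, hσx⟩
  have hinj : S.InjOn (fun x => s(x, σ x)) := by
    rintro x ⟨hx, -⟩ y ⟨-, hσy⟩ hxy
    rcases Sym2.eq_iff.mp hxy with ⟨rfl, -⟩ | ⟨rfl, -⟩
    · rfl
    · exact absurd hx hσy
  -- `S` corresponds to the crossing edges, and `X \ S` is matched within itself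
  have hinner : (M.induce (X \ S)).IsMatching := by
    rintro v ⟨hvX, hvS⟩
    have hσv : σ v ∈ X := by_contra fun h => hvS ⟨hvX, h⟩
    refine ⟨σ v, ⟨⟨hvX, hvS⟩, ⟨hσv, fun h => h.2 ((hσσ v).symm ▸ hvX)⟩, hσ v⟩, ?_⟩
    exact fun w hw => huniq v w hw.2.2
  rw [hcut, hinj.ncard_image,
    ← Set.ncard_sdiff_add_ncard_of_subset (show S ⊆ X from Set.sep_subset _ _),
    Nat.odd_add']
  have hY : Even (X \ S).ncard := by simpa using hinner.even_ncard_verts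
  simp only [hY, iff_true]

lemma ncard_inter_cutEdges_le_matchingPorosity [Finite V] {M : G.Subgraph}
    (hM : M.IsPerfectMatching) (X : Set V) :
    (M.edgeSet ∩ cutEdges G X).ncard ≤ matchingPorosity G X :=
  le_csSup ⟨Nat.card (Sym2 V), by rintro _ ⟨M, -, rfl⟩; exact Set.ncard_le_card _⟩ ⟨M, hM, rfl⟩

lemma matchingPorosity_le_card [Finite V] (X : Set V) :
    matchingPorosity G X ≤ Nat.card (Sym2 V) :=
  csSup_le' <| by rintro _ ⟨M, -, rfl⟩; exact Set.ncard_le_card _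

lemma isTightCut_of_odd_of_matchingPorosity_le_two [Finite V] {X : Set V}
    (hX : Odd X.ncard) (h : matchingPorosity G X ≤ 2) : IsTightCut G X := fun M hM => by
  obtain ⟨k, hk⟩ := (hM.odd_ncard_inter_cutEdges_iff X).mpr hX
  have := (ncard_inter_cutEdges_le_matchingPorosity hM X).trans h
  omega

lemma MatchingCovered.even_card [Finite V] (hG : MatchingCovered G) (hV : 1 < Nat.card V) :
    Even (Nat.card V) := by
  have := Fintype.ofFinite V
  have : Nontrivial V := Finite.one_lt_card_iff_nontrivial.mp hV
  obtain ⟨v⟩ := hG.1.nonempty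
  obtain ⟨w, hvw⟩ := hG.1.preconnected.exists_adj_of_nontrivial v
  obtain ⟨M, hM, -⟩ := hG.2 s(v, w) hvw
  simpa [Nat.card_eq_fintype_card] using hM.even_card

end Matching

end SimpleGraph

section Decomposition

variable {V : Type*} {G : SimpleGraph V} {n : ℕ} {T : SimpleGraph (Fin n)} {δ : V → Fin n}

lemma matchingPorosity_treeShore_le_decompWidth [Finite V] {t₁ t₂ : Fin n} (h : T.Adj t₁ t₂) :
    matchingPorosity G (treeShore T δ t₁ t₂) ≤ decompWidth G T δ :=
  le_csSup ⟨Nat.card (Sym2 V), by rintro _ ⟨_, _, -, rfl⟩; exact matchingPorosity_le_card _⟩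
    ⟨t₁, t₂, h, rfl⟩

lemma IsPMDecomp.range_eq (hT : IsPMDecomp G T δ) : Set.range δ = {ℓ | ndeg T ℓ = 1} :=
  Set.ext fun ℓ => ⟨by rintro ⟨v, rfl⟩; exact hT.2.2.1 v, hT.2.2.2 ℓ⟩

lemma IsPMDecomp.card_eq_ncard_leaves (hT : IsPMDecomp G T δ) :
    Nat.card V = {ℓ | ndeg T ℓ = 1}.ncard := by
  rw [← hT.range_eq, Set.ncard_range_of_injective hT.2.1]

lemma IsPMDecomp.ncard_treeShore (hT : IsPMDecomp G T δ) (a t : Fin n) :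
    (treeShore T δ a t).ncard = (sideLeaves T a t).ncard := by
  have hshore : treeShore T δ a t = δ ⁻¹' sideLeaves T a t :=
    Set.ext fun v => ⟨fun hv => ⟨hT.2.2.1 v, hv⟩, And.right⟩
  rw [hshore, Set.ncard_preimage_of_injective_subset_range hT.2.1
    (hT.range_eq ▸ Set.inter_subset_left)]

lemma IsBrickOrBrace.even_ncard_treeShore [Finite V] (hG : IsBrickOrBrace G)
    (hT : IsPMDecomp G T δ) (hw : decompWidth G T δ ≤ 2) {a t : Fin n} (h : T.Adj a t)
    (ha : ndeg T a ≠ 1) (ht : ndeg T t ≠ 1) : Even (treeShore T δ a t).ncard := by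
  have h2 : ∀ {a t}, T.Adj a t → ndeg T a ≠ 1 → 2 ≤ (treeShore T δ a t).ncard :=
    fun h ha => hT.ncard_treeShore _ _ ▸
      hT.1.1.isAcyclic.two_le_ncard_sideLeaves h ((hT.1.2 _).resolve_left ha).ge
  by_contra hodd
  refine hG.2 _ ⟨isTightCut_of_odd_of_matchingPorosity_le_two (Nat.not_even_iff_odd.mp hodd)
    ((matchingPorosity_treeShore_le_decompWidth h).trans hw), h2 h ha, ?_⟩
  exact (h2 h.symm ht).trans
    (Set.ncard_le_ncard ((hT.1.1.isAcyclic.disjoint_treeSide_swap h).preimage δ).subset_compl_left)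

end Decomposition

theorem spine_cubic_of_width_two_general {V : Type*} [Finite V] (G : SimpleGraph V)
    (hG : IsBrickOrBrace G)
    {n : ℕ} (T : SimpleGraph (Fin n)) (δ : V → Fin n)
    (hT : IsPMDecomp G T δ) (hw : decompWidth G T δ = 2) :
    ∀ t, ndeg T t ≠ 1 → spineDeg T t = 1 ∨ spineDeg T t = 3 := by
  classical
  intro t ht
  have hodd : ∀ z ∈ T.neighborFinset t, Odd (sideLeaves T z t).ncard ↔ ndeg T z = 1 := by
    intro z hz
    rw [mem_neighborFinset] at hz
    by_cases hz1 : ndeg T z = 1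
    · simp [hz1, sideLeaves_eq_inter, treeSide_eq_singleton hz.symm hz1]
    · rw [← hT.ncard_treeShore, ← Nat.not_even_iff_odd]
      simpa [hz1] using hG.even_ncard_treeShore hT hw.le hz.symm hz1 ht
  have h3 : ndeg T t = 3 := (hT.1.2 t).resolve_left ht
  obtain ⟨z, hz⟩ : (T.neighborSet t).Nonempty :=
    (Set.ncard_pos (Set.toFinite _)).mp (by change 0 < ndeg T t; omega)
  have heven : Even #{z ∈ T.neighborFinset t | ndeg T z = 1} := by
    rw [← Finset.filter_congr hodd, ← Finset.even_sum_iff_even_card_odd,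
      ← hT.1.1.ncard_leaves_eq_sum_ncard_sideLeaves ht, ← hT.card_eq_ncard_leaves]
    exact hG.1.even_card (hT.card_eq_ncard_leaves ▸ hT.1.1.isAcyclic.one_lt_ncard_leaves hz)
  have hsum : spineDeg T t + _ = 3 := h3 ▸ spineDeg_add_card_filter_leaf
  obtain ⟨k, hk⟩ := heven
  omega

/-- For a brick or brace of perfect matching width `2` and a PM-decomposition
`(T, δ)` of width `2`, the spine of `T` is cubic. -/
theorem spine_cubic_of_width_two {V : Type*} [Finite V] (G : SimpleGraph V)
    (hG : IsBrickOrBrace G) (hpmw : pmw G = 2)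
    {n : ℕ} (T : SimpleGraph (Fin n)) (δ : V → Fin n)
    (hT : IsPMDecomp G T δ) (hw : decompWidth G T δ = 2) :
    ∀ t, ndeg T t ≠ 1 → spineDeg T t = 1 ∨ spineDeg T t = 3 :=
  spine_cubic_of_width_two_general G hG T δ hT hw
end

section
/- Let G be a brace with colour classes A and B and let X ⊆ V(G) satisfy mp(∂(X)) = 2 and 4 ≤ |X| ≤ |V(G)| − 4. Then the balance of X equals 2, i.e. ||X ∩ A| − |X ∩ B|| = 2. -/
/-!
Fix a perfect matching `M` and let `a`, `b` count the vertices of `X ∩ A`, resp. `X ∩ B`, whose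
mate lies outside `X`. Then `M` has `a + b` edges in `∂(X)`, and the balance
`|X ∩ A| - |X ∩ B|` equals `a - b`, since the mates of the other vertices of `X ∩ A` are
exactly the other vertices of `X ∩ B`. A perfect matching with two edges in `∂(X)` thus gives
balance `2` unless `a = b = 1`, i.e. unless `X` is balanced.

A balanced `X` is impossible. In a brace, every nonempty `S ⊆ A` with `|S| ≤ |A| - 2` has
`|N(S)| ≥ |S| + 2`: each perfect matching has exactly `|N(S)| - |S|` edges leaving `S ∪ N(S)`,
so otherwise this cut is either missed by every perfect matching, contradicting that `G` is
connected and matching covered, or it is a non-trivial tight cut. By Hall's theorem this expansion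
makes braces 2-extendable, and applied to `X ∩ A` and to `X ∩ A` minus a vertex it yields two
disjoint edges from `X ∩ A` to the outside of `X`. A perfect matching through both has `a ≥ 2`,
hence `a = b ≥ 2`, so at least four edges in `∂(X)`, contradicting `mp(∂(X)) = 2`.
-/

open SimpleGraph

namespace SimpleGraph.Subgraph.IsPerfectMatching

variable {V : Type*} {G : SimpleGraph V} {M : G.Subgraph} (hM : M.IsPerfectMatching)

noncomputable def mate (v : V) : V := (hM.1 (hM.2 v)).exists.choose

lemma adj_mate (v : V) : M.Adj v (hM.mate v) := (hM.1 (hM.2 v)).exists.choose_spec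

lemma eq_mate_of_adj {v w : V} (h : M.Adj v w) : w = hM.mate v :=
  (hM.1 (hM.2 v)).unique h (hM.adj_mate v)

lemma mate_involutive : Function.Involutive hM.mate := fun v =>
  (hM.eq_mate_of_adj (hM.adj_mate v).symm).symm

lemma ncard_edgeSet_inter_cutEdges (X : Set V) :
    (M.edgeSet ∩ cutEdges G X).ncard = (X \ hM.mate ⁻¹' X).ncard := by
  have hbij : Set.BijOn (fun v => s(v, hM.mate v)) (X \ hM.mate ⁻¹' X)
      (M.edgeSet ∩ cutEdges G X) := by
    refine ⟨fun v ⟨hv, hmv⟩ => ?_, fun u ⟨hu, _⟩ v ⟨_, hmv⟩ huv => ?_, ?_⟩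
    · exact ⟨hM.adj_mate v, M.adj_sub (hM.adj_mate v), v, _, rfl, hv, hmv⟩
    · rcases Sym2.eq_iff.1 huv with ⟨h, _⟩ | ⟨h, _⟩
      · exact h
      · exact absurd (show hM.mate v ∈ X from h ▸ hu) hmv
    · rintro e ⟨he, -, u, v, rfl, hu, hv⟩
      obtain rfl := hM.eq_mate_of_adj (Subgraph.mem_edgeSet.1 he)
      exact ⟨u, ⟨hu, hv⟩, rfl⟩
  rw [← hbij.image_eq, hbij.injOn.ncard_image]

end SimpleGraph.Subgraph.IsPerfectMatching

lemma exists_injOn_of_forall_ncard_le {V : Type*} [Finite V] {S : Set V} {r : V → V → Prop}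
    (h : ∀ T ⊆ S, T.ncard ≤ {b | ∃ a ∈ T, r a b}.ncard) :
    ∃ g : V → V, Set.InjOn g S ∧ ∀ a ∈ S, r a (g a) := by
  classical
  have := Fintype.ofFinite V
  obtain ⟨f, hf_inj, hf⟩ := (Fintype.all_card_le_filter_rel_iff_exists_injective
    (fun (a : S) b => r a b)).1 fun T => by
      have hT := h (Subtype.val '' (T : Set S)) (by simp)
      rw [Set.ncard_image_of_injective _ Subtype.val_injective, Set.ncard_coe_finset] at hT
      convert hT using 1
      rw [← Set.ncard_coe_finset]
      congr 1
      ext b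
      simp
  refine ⟨fun v => if hv : v ∈ S then f ⟨v, hv⟩ else v, fun u hu v hv huv => ?_,
    fun a ha => ?_⟩
  · exact congrArg Subtype.val (hf_inj (by simpa [hu, hv] using huv))
  · simpa [ha] using hf ⟨a, ha⟩

section MatchingPorosity

variable {V : Type*} [Finite V] {G : SimpleGraph V}

lemma bddAbove_ncard_edgeSet_inter_cutEdges (G : SimpleGraph V) (X : Set V) :
    BddAbove {n | ∃ M : G.Subgraph, M.IsPerfectMatching ∧
      n = (M.edgeSet ∩ cutEdges G X).ncard} := by
  refine ⟨Nat.card (Sym2 V), ?_⟩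
  rintro _ ⟨M, -, rfl⟩
  exact Set.ncard_le_card _

lemma ncard_edgeSet_inter_cutEdges_le_matchingPorosity {M : G.Subgraph}
    (hM : M.IsPerfectMatching) (X : Set V) :
    (M.edgeSet ∩ cutEdges G X).ncard ≤ matchingPorosity G X :=
  le_csSup (bddAbove_ncard_edgeSet_inter_cutEdges G X) ⟨M, hM, rfl⟩

lemma exists_ncard_edgeSet_inter_cutEdges_eq_matchingPorosity {X : Set V}
    (h : matchingPorosity G X ≠ 0) :
    ∃ M : G.Subgraph, M.IsPerfectMatching ∧
      (M.edgeSet ∩ cutEdges G X).ncard = matchingPorosity G X := by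
  have hne : {n | ∃ M : G.Subgraph, M.IsPerfectMatching ∧
      n = (M.edgeSet ∩ cutEdges G X).ncard}.Nonempty := by
    by_contra hemp
    exact h (by
      rw [matchingPorosity, Set.not_nonempty_iff_eq_empty.1 hemp, csSup_empty, bot_eq_zero])
  obtain ⟨M, hM, hMX⟩ := Nat.sSup_mem hne (bddAbove_ncard_edgeSet_inter_cutEdges G X)
  exact ⟨M, hM, hMX.symm⟩

end MatchingPorosity

lemma MatchingCovered.exists_isPerfectMatching_cutEdges_nonempty {V : Type*} {G : SimpleGraph V}
    (hG : MatchingCovered G) {X : Set V} {x y : V} (hx : x ∈ X) (hy : y ∉ X) :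
    ∃ M : G.Subgraph, M.IsPerfectMatching ∧ (M.edgeSet ∩ cutEdges G X).Nonempty := by
  obtain ⟨d, -, hd, hd'⟩ := (hG.1.preconnected x y).some.exists_boundary_dart X hx hy
  obtain ⟨M, hM, he⟩ := hG.2 d.edge d.edge_mem
  exact ⟨M, hM, d.edge, he, d.edge_mem, d.fst, d.snd, rfl, hd, hd'⟩

namespace IsBipartitionOf

variable {V : Type*} {G : SimpleGraph V} {A B : Set V} {M : G.Subgraph}

lemma isBipartiteWith (hG : IsBipartitionOf G A B) : G.IsBipartiteWith A B := ⟨hG.2.1, hG.2.2⟩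

lemma symm (hG : IsBipartitionOf G A B) : IsBipartitionOf G B A :=
  ⟨Set.union_comm A B ▸ hG.1, hG.2.1.symm, fun _ _ h => (hG.2.2 h).symm⟩

lemma mem_right_of_notMem_left (hG : IsBipartitionOf G A B) {v : V} (hv : v ∉ A) : v ∈ B :=
  (Set.eq_univ_iff_forall.1 hG.1 v).resolve_left hv

lemma biUnion_neighborSet_subset (hG : IsBipartitionOf G A B) {S : Set V} (hS : S ⊆ A) :
    (⋃ a ∈ S, G.neighborSet a) ⊆ B := by
  simp only [Set.iUnion_subset_iff]
  exact fun a ha => isBipartiteWith_neighborSet_subset hG.isBipartiteWith (hS ha)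

lemma ncard_inter_add_ncard_inter [Finite V] (hG : IsBipartitionOf G A B) (Y : Set V) :
    (Y ∩ A).ncard + (Y ∩ B).ncard = Y.ncard := by
  rw [← Set.ncard_union_eq (hG.2.1.mono Set.inter_subset_right Set.inter_subset_right),
    ← Set.inter_union_distrib_left, hG.1, Set.inter_univ]

lemma mate_mem (hG : IsBipartitionOf G A B) (hM : M.IsPerfectMatching) {v : V} (hv : v ∈ A) :
    hM.mate v ∈ B :=
  hG.isBipartiteWith.mem_of_mem_adj hv (M.adj_sub (hM.adj_mate v))

lemma ncard_le_ncard_of_isPerfectMatching [Finite V] (hG : IsBipartitionOf G A B)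
    (hM : M.IsPerfectMatching) : A.ncard ≤ B.ncard :=
  Set.ncard_le_ncard_of_injOn hM.mate (fun _ => hG.mate_mem hM) hM.mate_involutive.injective.injOn

lemma ncard_eq_ncard_of_isPerfectMatching [Finite V] (hG : IsBipartitionOf G A B)
    (hM : M.IsPerfectMatching) : A.ncard = B.ncard :=
  (hG.ncard_le_ncard_of_isPerfectMatching hM).antisymm
    (hG.symm.ncard_le_ncard_of_isPerfectMatching hM)

lemma ncard_inter_preimage_mate_le [Finite V] (hG : IsBipartitionOf G A B)
    (hM : M.IsPerfectMatching) (X : Set V) :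
    (X ∩ A ∩ hM.mate ⁻¹' X).ncard ≤ (X ∩ B ∩ hM.mate ⁻¹' X).ncard := by
  refine Set.ncard_le_ncard_of_injOn hM.mate
    (fun v ⟨⟨hv, hvA⟩, hmv⟩ => ⟨⟨hmv, hG.mate_mem hM hvA⟩, ?_⟩)
    hM.mate_involutive.injective.injOn
  rwa [Set.mem_preimage, hM.mate_involutive]

lemma ncard_inter_sub_ncard_inter [Finite V] (hG : IsBipartitionOf G A B) (hM : M.IsPerfectMatching) (X : Set V) :
    ((X ∩ A).ncard : ℤ) - (X ∩ B).ncard =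
      ((X \ hM.mate ⁻¹' X) ∩ A).ncard - ((X \ hM.mate ⁻¹' X) ∩ B).ncard := by
  have hA := Set.ncard_inter_add_ncard_sdiff_eq_ncard (X ∩ A) (hM.mate ⁻¹' X)
  have hB := Set.ncard_inter_add_ncard_sdiff_eq_ncard (X ∩ B) (hM.mate ⁻¹' X)
  have hAB := hG.ncard_inter_preimage_mate_le hM X
  have hBA := hG.symm.ncard_inter_preimage_mate_le hM X
  rw [Set.inter_sdiff_right_comm] at hA hB
  omega

lemma ncard_edgeSet_inter_cutEdges_union_biUnion_neighborSet [Finite V]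
    (hG : IsBipartitionOf G A B) (hM : M.IsPerfectMatching) {S : Set V} (hS : S ⊆ A) :
    (M.edgeSet ∩ cutEdges G (S ∪ ⋃ a ∈ S, G.neighborSet a)).ncard + S.ncard =
      (⋃ a ∈ S, G.neighborSet a).ncard := by
  set N := ⋃ a ∈ S, G.neighborSet a
  have hNB : N ⊆ B := hG.biUnion_neighborSet_subset hS
  have hmate : ∀ a ∈ S, hM.mate a ∈ N := fun a ha =>
    Set.mem_biUnion ha (M.adj_sub (hM.adj_mate a))
  have hsub : hM.mate ⁻¹' S ⊆ N := fun v hv => hM.mate_involutive v ▸ hmate _ hv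
  have hcut : (S ∪ N) \ hM.mate ⁻¹' (S ∪ N) = N \ hM.mate ⁻¹' S := by
    ext v
    simp only [Set.mem_sdiff, Set.mem_union, Set.mem_preimage, not_or]
    constructor
    · rintro ⟨hvS | hvN, hmS, hmN⟩
      · exact absurd (hmate v hvS) hmN
      · exact ⟨hvN, hmS⟩
    · rintro ⟨hvN, hmS⟩
      exact ⟨Or.inr hvN, hmS, fun hmN =>
        Set.disjoint_left.1 hG.2.1 (hG.symm.mate_mem hM (hNB hvN)) (hNB hmN)⟩
  rw [hM.ncard_edgeSet_inter_cutEdges, hcut, ← hM.mate_involutive.image_eq_preimage_symm,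
    ← Set.ncard_image_of_injective S hM.mate_involutive.injective,
    hM.mate_involutive.image_eq_preimage_symm, Set.ncard_sdiff_add_ncard_of_subset hsub]

lemma ncard_biUnion_neighborSet_le [Finite V] {S : Set V} (hG : IsBipartitionOf G A B)
    (hS : S ⊆ A) (X : Set V) :
    (⋃ a ∈ S, G.neighborSet a).ncard ≤
      (X ∩ B).ncard + ((⋃ a ∈ S, G.neighborSet a) \ X).ncard := by
  have hsplit := Set.ncard_inter_add_ncard_sdiff_eq_ncard (⋃ a ∈ S, G.neighborSet a) X
  have hin : ((⋃ a ∈ S, G.neighborSet a) ∩ X).ncard ≤ (X ∩ B).ncard :=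
    Set.ncard_le_ncard fun v ⟨hvN, hvX⟩ => ⟨hvX, hG.biUnion_neighborSet_subset hS hvN⟩
  omega

lemma exists_isPerfectMatching_of_bijOn (hG : IsBipartitionOf G A B) {g : V → V}
    (hg : Set.BijOn g A B) (hadj : ∀ a ∈ A, G.Adj a (g a)) :
    ∃ M : G.Subgraph, M.IsPerfectMatching ∧ ∀ a ∈ A, M.Adj a (g a) := by
  let M : G.Subgraph :=
    { verts := Set.univ
      Adj := fun u v => (u ∈ A ∧ g u = v) ∨ (v ∈ A ∧ g v = u)
      adj_sub := by
        rintro u v (⟨hu, rfl⟩ | ⟨hv, rfl⟩)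
        exacts [hadj u hu, (hadj v hv).symm]
      edge_vert := fun _ => Set.mem_univ _
      symm := ⟨fun _ _ => Or.symm⟩ }
  refine ⟨M, Subgraph.isPerfectMatching_iff.2 fun v => ?_, fun a ha => Or.inl ⟨ha, rfl⟩⟩
  by_cases hv : v ∈ A
  · refine ⟨g v, Or.inl ⟨hv, rfl⟩, ?_⟩
    rintro w (⟨-, rfl⟩ | ⟨hw, rfl⟩)
    · rfl
    · exact absurd (hg.mapsTo hw) (Set.disjoint_left.1 hG.2.1 hv)
  · obtain ⟨a, ha, rfl⟩ := hg.surjOn (hG.mem_right_of_notMem_left hv)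
    refine ⟨a, Or.inr ⟨ha, rfl⟩, ?_⟩
    rintro w (⟨hw, -⟩ | ⟨hw, hwa⟩)
    · exact absurd hw hv
    · exact hg.injOn hw ha hwa

end IsBipartitionOf

namespace IsBraceWith

variable {V : Type*} [Finite V] {G : SimpleGraph V} {A B : Set V}

lemma ncard_add_two_le_ncard_biUnion_neighborSet {S : Set V} (hG : IsBraceWith G A B)
    (hSA : S ⊆ A) (hS : S.Nonempty) (hcard : S.ncard + 2 ≤ A.ncard) :
    S.ncard + 2 ≤ (⋃ a ∈ S, G.neighborSet a).ncard := by
  obtain ⟨hmc, hbip, hnt⟩ := hG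
  set N := ⋃ a ∈ S, G.neighborSet a
  have hNB : N ⊆ B := hbip.biUnion_neighborSet_subset hSA
  have hcut : ∀ M : G.Subgraph, M.IsPerfectMatching →
      (M.edgeSet ∩ cutEdges G (S ∪ N)).ncard + S.ncard = N.ncard := fun _ hM =>
    hbip.ncard_edgeSet_inter_cutEdges_union_biUnion_neighborSet hM hSA
  have hout : A \ S ⊆ (S ∪ N)ᶜ := fun a ⟨haA, haS⟩ h =>
    h.elim haS fun haN => Set.disjoint_left.1 hbip.2.1 haA (hNB haN)
  have hAS : 2 ≤ (A \ S).ncard := by rw [Set.ncard_sdiff hSA]; omega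
  obtain ⟨a, ha⟩ := Set.nonempty_of_ncard_ne_zero (by omega : (A \ S).ncard ≠ 0)
  obtain ⟨s, hs⟩ := hS
  -- some perfect matching crosses `S ∪ N`, so `|N| > |S|`; if `|N| = |S| + 1` the cut is tight
  obtain ⟨M₀, hM₀, hcross⟩ :=
    hmc.exists_isPerfectMatching_cutEdges_nonempty (Or.inl hs : s ∈ S ∪ N) (hout ha)
  have hpos := (Set.ncard_pos (Set.toFinite _)).2 hcross
  have hM₀cut := hcut M₀ hM₀
  by_contra hlt
  refine hnt (S ∪ N) ⟨fun M hM => by have := hcut M hM; omega, ?_, ?_⟩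
  · have := (Set.ncard_pos (Set.toFinite S)).2 ⟨s, hs⟩
    rw [Set.ncard_union_eq (hbip.2.1.mono hSA hNB)]
    omega
  · exact hAS.trans (Set.ncard_le_ncard hout)

lemma exists_injOn_sdiff_adj_notMem {P Q : Set V} (hG : IsBraceWith G A B) (hPA : P ⊆ A)
    (hP : 2 ≤ P.ncard) (hQ : Q.ncard ≤ 2) :
    ∃ g : V → V, Set.InjOn g (A \ P) ∧ ∀ a ∈ A \ P, G.Adj a (g a) ∧ g a ∉ Q := by
  refine exists_injOn_of_forall_ncard_le (r := fun a b => G.Adj a b ∧ b ∉ Q) fun T hT => ?_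
  rcases T.eq_empty_or_nonempty with rfl | hTne
  · simp
  have hTA : T.ncard + 2 ≤ A.ncard := by
    have := Set.ncard_le_ncard hT
    have := Set.ncard_sdiff_add_ncard_of_subset hPA
    omega
  have hexp := hG.ncard_add_two_le_ncard_biUnion_neighborSet (hT.trans Set.sdiff_subset) hTne hTA
  have hN : {b | ∃ a ∈ T, G.Adj a b ∧ b ∉ Q} = (⋃ a ∈ T, G.neighborSet a) \ Q := by
    ext
    simp only [Set.mem_ofPred_eq, Set.mem_sdiff, Set.mem_iUnion₂, mem_neighborSet, exists_prop]
    aesop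
  have := Set.le_ncard_sdiff Q (⋃ a ∈ T, G.neighborSet a)
  rw [hN]
  omega

lemma exists_isPerfectMatching_adj_adj (hG : IsBraceWith G A B) {a₁ a₂ b₁ b₂ : V}
    (ha₁ : a₁ ∈ A) (ha₂ : a₂ ∈ A) (ha : a₁ ≠ a₂) (hb : b₁ ≠ b₂)
    (h₁ : G.Adj a₁ b₁) (h₂ : G.Adj a₂ b₂) :
    ∃ M : G.Subgraph, M.IsPerfectMatching ∧ M.Adj a₁ b₁ ∧ M.Adj a₂ b₂ := by
  classical
  obtain ⟨hmc, hbip, -⟩ := id hG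
  obtain ⟨g, hg_inj, hg⟩ := hG.exists_injOn_sdiff_adj_notMem
    (Set.insert_subset ha₁ (Set.singleton_subset_iff.2 ha₂)) (Set.ncard_pair ha).ge
    (Set.ncard_pair hb).le
  set g' : V → V := fun v => if v = a₁ then b₁ else if v = a₂ then b₂ else g v
  have hadj : ∀ a ∈ A, G.Adj a (g' a) := by
    intro a haA
    by_cases h₁' : a = a₁
    · simp [g', h₁', h₁]
    by_cases h₂' : a = a₂
    · simp [g', h₂', h₂, ha.symm]
    simpa [g', h₁', h₂'] using (hg a ⟨haA, by simp [h₁', h₂']⟩).1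
  have hinj : Set.InjOn g' A := by
    intro x hx y hy hxy
    have hgx := fun h => hg x ⟨hx, h⟩
    have hgy := fun h => hg y ⟨hy, h⟩
    have hxy' := fun hx' hy' => hg_inj (x₁ := x) (x₂ := y) ⟨hx, hx'⟩ ⟨hy, hy'⟩
    simp only [g', Set.mem_insert_iff, Set.mem_singleton_iff, not_or] at hgx hgy hxy' hxy
    grind
  have hbij : Set.BijOn g' A B := by
    obtain ⟨M₀, hM₀, -⟩ := hmc.2 s(a₁, b₁) h₁
    have himage : g' '' A = B := Set.eq_of_subset_of_ncard_le
      (Set.image_subset_iff.2 fun a ha => hbip.isBipartiteWith.mem_of_mem_adj ha (hadj a ha))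
      (by rw [hinj.ncard_image, hbip.ncard_eq_ncard_of_isPerfectMatching hM₀])
    exact himage ▸ hinj.bijOn_image
  obtain ⟨M, hM, hMadj⟩ := hbip.exists_isPerfectMatching_of_bijOn hbij hadj
  exact ⟨M, hM, by simpa [g'] using hMadj a₁ ha₁,
    by simpa [g', ha.symm] using hMadj a₂ ha₂⟩

lemma exists_adj_adj_notMem (hG : IsBraceWith G A B) {X : Set V}
    (hXB : (X ∩ B).ncard ≤ (X ∩ A).ncard) (h2 : 2 ≤ (X ∩ A).ncard)
    (hA : (X ∩ A).ncard + 2 ≤ A.ncard) :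
    ∃ p r q w, p ∈ X ∩ A ∧ r ∈ X ∩ A ∧ q ∉ X ∧ w ∉ X ∧ p ≠ r ∧ q ≠ w ∧
      G.Adj p q ∧ G.Adj r w := by
  have hexp := hG.ncard_add_two_le_ncard_biUnion_neighborSet Set.inter_subset_right
    (Set.nonempty_of_ncard_ne_zero (by omega)) hA
  have hout := hG.2.1.ncard_biUnion_neighborSet_le (Set.inter_subset_right : X ∩ A ⊆ A) X
  obtain ⟨q₁, hq₁, q₂, hq₂, hq⟩ := (Set.one_lt_ncard (Set.toFinite _)).1
    (by omega : 1 < ((⋃ a ∈ X ∩ A, G.neighborSet a) \ X).ncard)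
  simp only [Set.mem_sdiff, Set.mem_iUnion₂, mem_neighborSet, exists_prop] at hq₁ hq₂
  obtain ⟨⟨p, hp, hpq₁⟩, hq₁X⟩ := hq₁
  obtain ⟨⟨p₂, hp₂, hpq₂⟩, hq₂X⟩ := hq₂
  by_cases hpp : p = p₂
  swap
  · exact ⟨p, p₂, q₁, q₂, hp, hp₂, hq₁X, hq₂X, hpp, hq, hpq₁, hpq₂⟩
  subst hpp
  -- both edges leave from `p`: expand `(X ∩ A) \ {p}` to find an edge out of `X` avoiding `p`
  have hS : ((X ∩ A) \ {p}).ncard + 1 = (X ∩ A).ncard := Set.ncard_sdiff_singleton_add_one hp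
  have hSA : (X ∩ A) \ {p} ⊆ A := Set.sdiff_subset.trans Set.inter_subset_right
  have hexp' := hG.ncard_add_two_le_ncard_biUnion_neighborSet hSA
    (Set.nonempty_of_ncard_ne_zero (by omega)) (by omega)
  have hout' := hG.2.1.ncard_biUnion_neighborSet_le hSA X
  obtain ⟨w, hw⟩ := Set.nonempty_of_ncard_ne_zero
    (by omega : ((⋃ a ∈ (X ∩ A) \ {p}, G.neighborSet a) \ X).ncard ≠ 0)
  simp only [Set.mem_sdiff, Set.mem_iUnion₂, mem_neighborSet, exists_prop,
    Set.mem_singleton_iff] at hw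
  obtain ⟨⟨r, ⟨hr, hrp⟩, hrw⟩, hwX⟩ := hw
  by_cases hwq : w = q₁
  · exact ⟨p, r, q₂, w, hp, hr, hq₂X, hwX, Ne.symm hrp, hwq ▸ hq.symm, hpq₂, hrw⟩
  · exact ⟨p, r, q₁, w, hp, hr, hq₁X, hwX, Ne.symm hrp, Ne.symm hwq, hpq₁, hrw⟩

lemma exists_four_le_ncard_edgeSet_inter_cutEdges (hG : IsBraceWith G A B) {X : Set V}
    (hbal : (X ∩ A).ncard = (X ∩ B).ncard) (hX : 4 ≤ X.ncard) (hXc : 4 ≤ Xᶜ.ncard) :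
    ∃ M : G.Subgraph, M.IsPerfectMatching ∧ 4 ≤ (M.edgeSet ∩ cutEdges G X).ncard := by
  obtain ⟨hmc, hbip, -⟩ := id hG
  obtain ⟨x, hx⟩ := Set.nonempty_of_ncard_ne_zero (by omega : X.ncard ≠ 0)
  obtain ⟨y, hy⟩ := Set.nonempty_of_ncard_ne_zero (by omega : Xᶜ.ncard ≠ 0)
  obtain ⟨M₀, hM₀, -⟩ := hmc.exists_isPerfectMatching_cutEdges_nonempty hx hy
  have hAB := hbip.ncard_eq_ncard_of_isPerfectMatching hM₀
  have hX' := hbip.ncard_inter_add_ncard_inter X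
  have hXc' := hbip.ncard_inter_add_ncard_inter Xᶜ
  have hA := Set.ncard_inter_add_ncard_sdiff_eq_ncard A X
  have hB := Set.ncard_inter_add_ncard_sdiff_eq_ncard B X
  rw [Set.inter_comm, Set.sdiff_eq_compl_inter] at hA hB
  obtain ⟨p, r, q, w, hp, hr, hq, hw, hpr, hqw, hpq, hrw⟩ :=
    hG.exists_adj_adj_notMem hbal.ge (by omega) (by omega)
  obtain ⟨M, hM, hMpq, hMrw⟩ := hG.exists_isPerfectMatching_adj_adj hp.2 hr.2 hpr hqw hpq hrw
  -- `p` and `r` are matched out of `X`, hence so are two vertices of `X ∩ B`, as `X` is balanced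
  have hpr_out : {p, r} ⊆ (X \ hM.mate ⁻¹' X) ∩ A := by
    rintro v (rfl | rfl)
    · exact ⟨⟨hp.1, by rwa [Set.mem_preimage, ← hM.eq_mate_of_adj hMpq]⟩, hp.2⟩
    · exact ⟨⟨hr.1, by rwa [Set.mem_preimage, ← hM.eq_mate_of_adj hMrw]⟩, hr.2⟩
  have h2 := Set.ncard_le_ncard hpr_out
  rw [Set.ncard_pair hpr] at h2
  have hbal' := hbip.ncard_inter_sub_ncard_inter hM X
  refine ⟨M, hM, ?_⟩
  rw [hM.ncard_edgeSet_inter_cutEdges, ← hbip.ncard_inter_add_ncard_inter]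
  omega

end IsBraceWith

/-- In a brace, every shore `X` of a cut of matching porosity 2 with
`4 ≤ |X| ≤ |V(G)| - 4` is imbalanced by exactly 2. -/
theorem brace_balance_two {V : Type*} [Finite V] (G : SimpleGraph V)
    (A B : Set V) (hBrace : IsBraceWith G A B) (X : Set V)
    (hmp : matchingPorosity G X = 2)
    (hlow : 4 ≤ X.ncard) (hhigh : X.ncard ≤ Nat.card V - 4) :
    |((X ∩ A).ncard : ℤ) - ((X ∩ B).ncard : ℤ)| = 2 := by
  obtain ⟨-, hbip, -⟩ := id hBrace
  have hXc : 4 ≤ Xᶜ.ncard := by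
    have := Set.ncard_add_ncard_compl X
    omega
  by_cases hbal : (X ∩ A).ncard = (X ∩ B).ncard
  · obtain ⟨M, hM, h4⟩ := hBrace.exists_four_le_ncard_edgeSet_inter_cutEdges hbal hlow hXc
    have := ncard_edgeSet_inter_cutEdges_le_matchingPorosity hM X
    omega
  obtain ⟨M, hM, hM2⟩ :=
    exists_ncard_edgeSet_inter_cutEdges_eq_matchingPorosity (hmp ▸ two_ne_zero)
  rw [hmp, hM.ncard_edgeSet_inter_cutEdges, ← hbip.ncard_inter_add_ncard_inter] at hM2
  have := hbip.ncard_inter_sub_ncard_inter hM X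
  rw [abs_eq zero_le_two]
  omega
end

section
/- Let G be a brace with colour classes A and B and let X ⊆ V(G) satisfy mp(∂(X)) = 2 and 4 ≤ |X| ≤ |V(G)| − 4. Then no vertex of the minority colour class of X has a neighbour in V(G)∖X (i.e., if A is the majority of X, then every vertex of X ∩ B has all its neighbours inside X). -/
open SimpleGraph

/-- vertices of `X ∩ C` matched outside `X` by `M`. -/
def sideCross {V : Type*} {G : SimpleGraph V} (M : G.Subgraph) (X C : Set V) : Set V :=
  {v | v ∈ X ∧ v ∈ C ∧ ∃ w, w ∉ X ∧ M.Adj v w}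

lemma bip_symm {V : Type*} {G : SimpleGraph V} {A B : Set V}
    (h : IsBipartitionOf G A B) : IsBipartitionOf G B A :=
  ⟨by rw [Set.union_comm]; exact h.1, h.2.1.symm, fun u v huv => (h.2.2 huv).symm⟩

lemma key_counts {V : Type*} [Finite V] {G : SimpleGraph V} {A B : Set V}
    (hBip : IsBipartitionOf G A B) (X : Set V) (M : G.Subgraph)
    (pm : M.IsPerfectMatching) :
    (M.edgeSet ∩ cutEdges G X).ncard
        = (sideCross M X A).ncard + (sideCross M X B).ncard
      ∧ (X ∩ A).ncard + (sideCross M X B).ncard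
        = (X ∩ B).ncard + (sideCross M X A).ncard := by
  classical
  have hpm : ∀ v : V, ∃ w, M.Adj v w ∧ ∀ y, M.Adj v y → y = w :=
    (SimpleGraph.Subgraph.isPerfectMatching_iff).mp pm
  choose f hf hu using hpm
  have hff : ∀ v, f (f v) = v := fun v => (hu (f v) v (hf v).symm).symm
  -- membership characterizations
  have hmem : ∀ C, ∀ v, v ∈ sideCross M X C ↔ v ∈ X ∧ v ∈ C ∧ f v ∉ X := by
    intro C v
    constructor
    · rintro ⟨h1, h2, w, hw, hadj⟩
      exact ⟨h1, h2, (hu v w hadj) ▸ hw⟩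
    · rintro ⟨h1, h2, h3⟩
      exact ⟨h1, h2, f v, h3, hf v⟩
  have hdisj : Disjoint (sideCross M X A) (sideCross M X B) := by
    refine Set.disjoint_left.mpr ?_
    rintro v ⟨_, hvA, _⟩ ⟨_, hvB, _⟩
    exact Set.disjoint_left.mp hBip.2.1 hvA hvB
  constructor
  · -- cut count
    have himg : (fun v => s(v, f v)) '' (sideCross M X A ∪ sideCross M X B)
        = M.edgeSet ∩ cutEdges G X := by
      ext e
      constructor
      · rintro ⟨v, hv, rfl⟩
        have hv' : v ∈ X ∧ f v ∉ X := by
          rcases hv with hv | hv <;> rcases (hmem _ v).mp hv with ⟨h1, _, h3⟩ <;> exact ⟨h1, h3⟩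
        exact ⟨(SimpleGraph.Subgraph.mem_edgeSet).mpr (hf v),
          (M.adj_sub (hf v)), v, f v, rfl, hv'.1, hv'.2⟩
      · rintro ⟨heM, -, u, w, rfl, huX, hwX⟩
        have hadj : M.Adj u w := (SimpleGraph.Subgraph.mem_edgeSet).mp heM
        have hfw : f u = w := (hu u w hadj).symm
        have huAB : u ∈ A ∪ B := hBip.1 ▸ Set.mem_univ u
        refine ⟨u, ?_, show s(u, f u) = s(u, w) by rw [hfw]⟩
        rcases huAB with h | h
        · exact Or.inl ⟨huX, h, w, hwX, hadj⟩
        · exact Or.inr ⟨huX, h, w, hwX, hadj⟩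
    have hinj : Set.InjOn (fun v => s(v, f v)) (sideCross M X A ∪ sideCross M X B) := by
      intro v hv u hup heq
      have hvX : v ∈ X := by rcases hv with h | h <;> exact h.1
      have hfu : f u ∉ X := by
        rcases hup with h | h <;> exact ((hmem _ u).mp h).2.2
      simp only [Sym2.eq, Sym2.rel_iff', Prod.mk.injEq, Prod.swap_prod_mk] at heq
      rcases heq with ⟨h1, _⟩ | ⟨h1, _⟩
      · exact h1
      · exact absurd (h1 ▸ hvX) hfu
    rw [← himg, Set.ncard_image_of_injOn hinj,
      Set.ncard_union_eq hdisj (Set.toFinite _) (Set.toFinite _)]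
  · -- balance
    have hTA : sideCross M X A ⊆ X ∩ A := fun v hv => ⟨hv.1, hv.2.1⟩
    have hTB : sideCross M X B ⊆ X ∩ B := fun v hv => ⟨hv.1, hv.2.1⟩
    have hdA : ((X ∩ A) \ sideCross M X A).ncard + (sideCross M X A).ncard
        = (X ∩ A).ncard := Set.ncard_diff_add_ncard_of_subset hTA (Set.toFinite _)
    have hdB : ((X ∩ B) \ sideCross M X B).ncard + (sideCross M X B).ncard
        = (X ∩ B).ncard := Set.ncard_diff_add_ncard_of_subset hTB (Set.toFinite _)
    have hTmem : ∀ C v, v ∈ (X ∩ C) \ sideCross M X C ↔ v ∈ X ∧ v ∈ C ∧ f v ∈ X := by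
      intro C v
      constructor
      · rintro ⟨⟨h1, h2⟩, h3⟩
        refine ⟨h1, h2, ?_⟩
        by_contra hfv
        exact h3 ((hmem C v).mpr ⟨h1, h2, hfv⟩)
      · rintro ⟨h1, h2, h3⟩
        exact ⟨⟨h1, h2⟩, fun hc => (((hmem C v).mp hc).2.2) h3⟩
    have hclass : ∀ v, v ∈ A → f v ∈ B := by
      intro v hvA
      rcases hBip.2.2 (M.adj_sub (hf v)) with ⟨_, h⟩ | ⟨h, _⟩
      · exact h
      · exact absurd hvA (Set.disjoint_right.mp hBip.2.1 h)
    have hclass' : ∀ v, v ∈ B → f v ∈ A := by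
      intro v hvB
      rcases hBip.2.2 (M.adj_sub (hf v)) with ⟨h, _⟩ | ⟨_, h⟩
      · exact absurd h (Set.disjoint_right.mp hBip.2.1 hvB)
      · exact h
    have himg : f '' ((X ∩ A) \ sideCross M X A) = (X ∩ B) \ sideCross M X B := by
      ext u
      constructor
      · rintro ⟨v, hv, rfl⟩
        rcases (hTmem A v).mp hv with ⟨h1, h2, h3⟩
        exact (hTmem B (f v)).mpr ⟨h3, hclass v h2, by rw [hff]; exact h1⟩
      · intro hu
        rcases (hTmem B u).mp hu with ⟨h1, h2, h3⟩
        refine ⟨f u, (hTmem A (f u)).mpr ⟨h3, hclass' u h2, by rw [hff]; exact h1⟩, hff u⟩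
    have hinj : Set.InjOn f ((X ∩ A) \ sideCross M X A) := by
      intro v _ u _ h
      have := congrArg f h
      rwa [hff, hff] at this
    have : ((X ∩ A) \ sideCross M X A).ncard = ((X ∩ B) \ sideCross M X B).ncard := by
      rw [← himg, Set.ncard_image_of_injOn hinj]
    omega

lemma main_half {V : Type*} [Finite V] {G : SimpleGraph V} {A B : Set V}
    (hMC : MatchingCovered G) (hBip : IsBipartitionOf G A B) (X : Set V)
    (hmp : matchingPorosity G X = 2) :
    (X ∩ B).ncard < (X ∩ A).ncard → ∀ v ∈ X ∩ B, ∀ w, G.Adj v w → w ∈ X := by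
  intro hab v hv w hadj
  by_contra hw
  obtain ⟨M, pmM, heM⟩ := hMC.2 s(v, w) hadj
  set N := {n | ∃ M : G.Subgraph, M.IsPerfectMatching ∧ n = (M.edgeSet ∩ cutEdges G X).ncard}
  have hbdd : BddAbove N := by
    refine ⟨Nat.card (Sym2 V), ?_⟩
    rintro n ⟨M', _, rfl⟩
    calc (M'.edgeSet ∩ cutEdges G X).ncard
        ≤ (Set.univ : Set (Sym2 V)).ncard :=
          Set.ncard_le_ncard (Set.subset_univ _) Set.finite_univ
      _ = Nat.card (Sym2 V) := Set.ncard_univ _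
  have hne : N.Nonempty := ⟨_, M, pmM, rfl⟩
  have h2 : 2 ∈ N := by
    have := Nat.sSup_mem hne hbdd
    rwa [show sSup N = 2 from hmp] at this
  obtain ⟨M₀, pm₀, h₀⟩ := h2
  obtain ⟨hc₀, hb₀⟩ := key_counts hBip X M₀ pm₀
  obtain ⟨hc, hb⟩ := key_counts hBip X M pmM
  have hle : (M.edgeSet ∩ cutEdges G X).ncard ≤ 2 := by
    have : (M.edgeSet ∩ cutEdges G X).ncard ∈ N := ⟨M, pmM, rfl⟩
    calc _ ≤ sSup N := le_csSup hbdd this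
      _ = 2 := hmp
  have hvS : v ∈ sideCross M X B :=
    ⟨hv.1, hv.2, w, hw, (SimpleGraph.Subgraph.mem_edgeSet).mp heM⟩
  have hpos : 0 < (sideCross M X B).ncard :=
    (Set.ncard_pos (Set.toFinite _)).mpr ⟨v, hvS⟩
  omega


/-- In a brace, for every shore `X` of a cut of matching porosity 2 with
`4 ≤ |X| ≤ |V(G)| - 4`, no vertex of the minority colour class of `X` has a
neighbour outside `X`. -/
theorem brace_minority_no_outside_neighbour {V : Type*} [Finite V]
    (G : SimpleGraph V) (A B : Set V) (hBrace : IsBraceWith G A B) (X : Set V)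
    (hmp : matchingPorosity G X = 2)
    (hlow : 4 ≤ X.ncard) (hhigh : X.ncard ≤ Nat.card V - 4) :
    ((X ∩ B).ncard < (X ∩ A).ncard →
      ∀ v ∈ X ∩ B, ∀ w, G.Adj v w → w ∈ X) ∧
    ((X ∩ A).ncard < (X ∩ B).ncard →
      ∀ v ∈ X ∩ A, ∀ w, G.Adj v w → w ∈ X) := by
  obtain ⟨hMC, hBip, -⟩ := hBrace
  exact ⟨main_half hMC hBip X hmp, main_half hMC (bip_symm hBip) X hmp⟩
end
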